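/- arXiv:1907.12032 — 3 statements merged into one kernel-verified Lean document; each statement's English description precedes it below -/
import Mathlib

section
/- Let T ∈ B(X) with X = M ⊕ N a decomposition into closed T-invariant subspaces. Then T = T_M ⊕ T_N is Riesz if and only if both T_M and T_N are Riesz. -/
noncomputable section

variable {X Y : Type*} [NormedAddCommGroup X] [NormedSpace ℂ X]
  [NormedAddCommGroup Y] [NormedSpace ℂ Y]

/-- α(T): the dimension of the kernel, as a cardinal. -/
def opAlpha (T : X →L[ℂ] Y) : Cardinal := Module.rank ℂ (LinearMap.ker (T : X →ₗ[ℂ] Y))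

/-- β(T): the codimension of the range, as a cardinal. -/
def opBeta (T : X →L[ℂ] Y) : Cardinal := Module.rank ℂ (Y ⧸ LinearMap.range (T : X →ₗ[ℂ] Y))

def IsUpperSemiFredholm (T : X →L[ℂ] Y) : Prop :=
  FiniteDimensional ℂ (LinearMap.ker (T : X →ₗ[ℂ] Y)) ∧ IsClosed (LinearMap.range (T : X →ₗ[ℂ] Y) : Set Y)

def IsLowerSemiFredholm (T : X →L[ℂ] Y) : Prop :=
  IsClosed (LinearMap.range (T : X →ₗ[ℂ] Y) : Set Y) ∧ FiniteDimensional ℂ (Y ⧸ LinearMap.range (T : X →ₗ[ℂ] Y))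

def IsFredholm (T : X →L[ℂ] Y) : Prop :=
  IsUpperSemiFredholm T ∧ IsLowerSemiFredholm T

/-- The Fredholm index: dim ker − codim ran. -/
def opInd (T : X →L[ℂ] Y) : ℤ :=
  (Module.finrank ℂ (LinearMap.ker (T : X →ₗ[ℂ] Y)) : ℤ) - (Module.finrank ℂ (Y ⧸ LinearMap.range (T : X →ₗ[ℂ] Y)) : ℤ)

def IsLeftSemiFredholm (T : X →L[ℂ] Y) : Prop :=
  IsUpperSemiFredholm T ∧ (LinearMap.range (T : X →ₗ[ℂ] Y)).ClosedComplemented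

def IsRightSemiFredholm (T : X →L[ℂ] Y) : Prop :=
  IsLowerSemiFredholm T ∧ (LinearMap.ker (T : X →ₗ[ℂ] Y)).ClosedComplemented

def HasFiniteAscent (T : X →L[ℂ] X) : Prop :=
  ∃ n : ℕ, LinearMap.ker ((T ^ n : X →L[ℂ] X) : X →ₗ[ℂ] X) = LinearMap.ker ((T ^ (n + 1) : X →L[ℂ] X) : X →ₗ[ℂ] X)

def HasFiniteDescent (T : X →L[ℂ] X) : Prop :=
  ∃ n : ℕ, LinearMap.range ((T ^ n : X →L[ℂ] X) : X →ₗ[ℂ] X) = LinearMap.range ((T ^ (n + 1) : X →L[ℂ] X) : X →ₗ[ℂ] X)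

def opAscent (T : X →L[ℂ] X) : ℕ :=
  sInf {n : ℕ | LinearMap.ker ((T ^ n : X →L[ℂ] X) : X →ₗ[ℂ] X) = LinearMap.ker ((T ^ (n + 1) : X →L[ℂ] X) : X →ₗ[ℂ] X)}

def opDescent (T : X →L[ℂ] X) : ℕ :=
  sInf {n : ℕ | LinearMap.range ((T ^ n : X →L[ℂ] X) : X →ₗ[ℂ] X) = LinearMap.range ((T ^ (n + 1) : X →L[ℂ] X) : X →ₗ[ℂ] X)}

def IsBrowder (T : X →L[ℂ] X) : Prop :=
  IsFredholm T ∧ HasFiniteAscent T ∧ HasFiniteDescent T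

def IsUpperSemiBrowder (T : X →L[ℂ] X) : Prop := IsUpperSemiFredholm T ∧ HasFiniteAscent T

def IsLowerSemiBrowder (T : X →L[ℂ] X) : Prop := IsLowerSemiFredholm T ∧ HasFiniteDescent T

def IsLeftSemiBrowder (T : X →L[ℂ] X) : Prop := IsLeftSemiFredholm T ∧ HasFiniteAscent T

def IsRightSemiBrowder (T : X →L[ℂ] X) : Prop := IsRightSemiFredholm T ∧ HasFiniteDescent T

def IsRiesz (T : X →L[ℂ] X) : Prop :=
  ∀ lam : ℂ, lam ≠ 0 → IsFredholm (T - lam • (1 : X →L[ℂ] X))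

def IsKato (T : X →L[ℂ] X) : Prop :=
  IsClosed (LinearMap.range (T : X →ₗ[ℂ] X) : Set X) ∧ ∀ n : ℕ, LinearMap.ker (T : X →ₗ[ℂ] X) ≤ LinearMap.range ((T ^ n : X →L[ℂ] X) : X →ₗ[ℂ] X)

/-- Restriction of a continuous linear operator to an invariant subspace. -/
def clmRestrict (T : X →L[ℂ] X) (M : Submodule ℂ X) (h : ∀ x ∈ M, T x ∈ M) : M →L[ℂ] M :=
  { toLinearMap := (T : X →ₗ[ℂ] X).restrict h
    cont := Continuous.subtype_mk (T.continuous.comp continuous_subtype_val) _ }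

/-- generalized Drazin–Riesz invertibility. -/
def IsGDRInvertible (T : X →L[ℂ] X) : Prop :=
  ∃ S : X →L[ℂ] X, T * S = S * T ∧ S * T * S = S ∧ IsRiesz (T - T * S * T)

/-- T admits a generalized Kato–Riesz decomposition. -/
def AdmitsGKRD (T : X →L[ℂ] X) : Prop :=
  ∃ (M N : Submodule ℂ X) (hM : ∀ x ∈ M, T x ∈ M) (hN : ∀ x ∈ N, T x ∈ N),
    IsClosed (M : Set X) ∧ IsClosed (N : Set X) ∧ IsCompl M N ∧
    IsKato (clmRestrict T M hM) ∧ IsRiesz (clmRestrict T N hN)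

def IsEssentiallyKato (T : X →L[ℂ] X) : Prop :=
  ∃ (M N : Submodule ℂ X) (hM : ∀ x ∈ M, T x ∈ M) (hN : ∀ x ∈ N, T x ∈ N),
    IsClosed (M : Set X) ∧ IsClosed (N : Set X) ∧ IsCompl M N ∧
    IsKato (clmRestrict T M hM) ∧ IsNilpotent (clmRestrict T N hN) ∧ FiniteDimensional ℂ N

def IsPolynomiallyRiesz (T : X →L[ℂ] X) : Prop :=
  ∃ p : Polynomial ℂ, p ≠ 0 ∧ IsRiesz (Polynomial.aeval T p)

def specB (T : X →L[ℂ] X) : Set ℂ := {lam | ¬ IsBrowder (T - lam • 1)}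
def specBplus (T : X →L[ℂ] X) : Set ℂ := {lam | ¬ IsUpperSemiBrowder (T - lam • 1)}
def specBminus (T : X →L[ℂ] X) : Set ℂ := {lam | ¬ IsLowerSemiBrowder (T - lam • 1)}
def specLB (T : X →L[ℂ] X) : Set ℂ := {lam | ¬ IsLeftSemiBrowder (T - lam • 1)}
def specRB (T : X →L[ℂ] X) : Set ℂ := {lam | ¬ IsRightSemiBrowder (T - lam • 1)}
def specGDR (T : X →L[ℂ] X) : Set ℂ := {lam | ¬ IsGDRInvertible (T - lam • 1)}
def specGKR (T : X →L[ℂ] X) : Set ℂ := {lam | ¬ AdmitsGKRD (T - lam • 1)}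
def specEK (T : X →L[ℂ] X) : Set ℂ := {lam | ¬ IsEssentiallyKato (T - lam • 1)}

/-- The set of accumulation points of a subset of ℂ. -/
def accPts (S : Set ℂ) : Set ℂ := {lam | AccPt lam (Filter.principal S)}

/-- The upper triangular operator matrix M_C = [[A, C], [0, B]] acting on X ⊕ Y. -/
def upperTriangular (A : X →L[ℂ] X) (B : Y →L[ℂ] Y) (C : Y →L[ℂ] X) :
    (X × Y) →L[ℂ] (X × Y) :=
  (A.comp (ContinuousLinearMap.fst ℂ X Y) + C.comp (ContinuousLinearMap.snd ℂ X Y)).prod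
    (B.comp (ContinuousLinearMap.snd ℂ X Y))

/-- The connected hull ηK of a compact set K: K together with all points whose
connected component in the complement of K is bounded. -/
def connectedHull (K : Set ℂ) : Set ℂ :=
  K ∪ {z | Bornology.IsBounded (connectedComponentIn Kᶜ z)}

end

section Aux

variable {W X Y : Type*} [NormedAddCommGroup W] [NormedSpace ℂ W]
  [NormedAddCommGroup X] [NormedSpace ℂ X] [NormedAddCommGroup Y] [NormedSpace ℂ Y]

/-- `p.prod q` is linearly equivalent to `p × q`. -/
def submoduleProdEquiv (p : Submodule ℂ X) (q : Submodule ℂ Y) :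
    (p.prod q) ≃ₗ[ℂ] p × q where
  toFun x := (⟨x.1.1, x.2.1⟩, ⟨x.1.2, x.2.2⟩)
  invFun x := ⟨(x.1.1, x.2.1), x.1.2, x.2.2⟩
  map_add' x y := rfl
  map_smul' c x := rfl
  left_inv x := rfl
  right_inv x := rfl

/-- The quotient by a product submodule is the product of the quotients. -/
noncomputable def quotProdEquiv (p : Submodule ℂ X) (q : Submodule ℂ Y) :
    ((X × Y) ⧸ p.prod q) ≃ₗ[ℂ] (X ⧸ p) × (Y ⧸ q) := by
  have hker : LinearMap.ker (p.mkQ.prodMap q.mkQ) = p.prod q := by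
    rw [LinearMap.ker_prodMap, Submodule.ker_mkQ, Submodule.ker_mkQ]
  have hsurj : Function.Surjective (p.mkQ.prodMap q.mkQ) := by
    rw [LinearMap.coe_prodMap]
    exact Prod.map_surjective.mpr ⟨p.mkQ_surjective, q.mkQ_surjective⟩
  exact (Submodule.quotEquivOfEq _ _ hker.symm).trans
    (LinearMap.quotKerEquivOfSurjective _ hsurj)

lemma ker_prodMapL (A : X →L[ℂ] X) (B : Y →L[ℂ] Y) :
    LinearMap.ker ((A.prodMap B : X × Y →L[ℂ] X × Y) : X × Y →ₗ[ℂ] X × Y) = (LinearMap.ker (A : X →ₗ[ℂ] X)).prod (LinearMap.ker (B : Y →ₗ[ℂ] Y)) := by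
  have happ : ∀ p : X × Y, (A.prodMap B) p = (A p.1, B p.2) := fun p => rfl
  ext ⟨x, y⟩
  simp [LinearMap.mem_ker, Submodule.mem_prod, happ, Prod.ext_iff]

lemma range_prodMapL (A : X →L[ℂ] X) (B : Y →L[ℂ] Y) :
    LinearMap.range ((A.prodMap B : X × Y →L[ℂ] X × Y) : X × Y →ₗ[ℂ] X × Y) = (LinearMap.range (A : X →ₗ[ℂ] X)).prod (LinearMap.range (B : Y →ₗ[ℂ] Y)) := by
  have happ : ∀ p : X × Y, (A.prodMap B) p = (A p.1, B p.2) := fun p => rfl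
  ext ⟨x, y⟩
  simp only [LinearMap.mem_range, Submodule.mem_prod, happ, Prod.ext_iff]
  constructor
  · rintro ⟨⟨a, b⟩, h1, h2⟩; exact ⟨⟨a, h1⟩, ⟨b, h2⟩⟩
  · rintro ⟨⟨a, h1⟩, ⟨b, h2⟩⟩; exact ⟨(a, b), h1, h2⟩

/-- Fredholmness of a product operator. -/
lemma isFredholm_prodMap_iff (A : X →L[ℂ] X) (B : Y →L[ℂ] Y) :
    IsFredholm (A.prodMap B) ↔ IsFredholm A ∧ IsFredholm B := by
  have hk := ker_prodMapL A B
  have hr := range_prodMapL A B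
  have hrs : (LinearMap.range ((A.prodMap B : X × Y →L[ℂ] X × Y) : X × Y →ₗ[ℂ] X × Y) : Set (X × Y)) =
      (LinearMap.range (A : X →ₗ[ℂ] X) : Set X) ×ˢ (LinearMap.range (B : Y →ₗ[ℂ] Y) : Set Y) := by
    rw [hr]; rfl
  have ekq : ((X × Y) ⧸ LinearMap.range ((A.prodMap B : X × Y →L[ℂ] X × Y) : X × Y →ₗ[ℂ] X × Y)) ≃ₗ[ℂ]
      (X ⧸ LinearMap.range (A : X →ₗ[ℂ] X)) × (Y ⧸ LinearMap.range (B : Y →ₗ[ℂ] Y)) :=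
    (Submodule.quotEquivOfEq (LinearMap.range ((A.prodMap B : X × Y →L[ℂ] X × Y) : X × Y →ₗ[ℂ] X × Y))
      ((LinearMap.range (A : X →ₗ[ℂ] X)).prod (LinearMap.range (B : Y →ₗ[ℂ] Y))) hr).trans
      (quotProdEquiv (LinearMap.range (A : X →ₗ[ℂ] X)) (LinearMap.range (B : Y →ₗ[ℂ] Y)))
  have ekk : (LinearMap.ker ((A.prodMap B : X × Y →L[ℂ] X × Y) : X × Y →ₗ[ℂ] X × Y)) ≃ₗ[ℂ]
      (LinearMap.ker (A : X →ₗ[ℂ] X)) × (LinearMap.ker (B : Y →ₗ[ℂ] Y)) :=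
    (LinearEquiv.ofEq (LinearMap.ker ((A.prodMap B : X × Y →L[ℂ] X × Y) : X × Y →ₗ[ℂ] X × Y))
      ((LinearMap.ker (A : X →ₗ[ℂ] X)).prod (LinearMap.ker (B : Y →ₗ[ℂ] Y))) hk).trans
      (submoduleProdEquiv (LinearMap.ker (A : X →ₗ[ℂ] X)) (LinearMap.ker (B : Y →ₗ[ℂ] Y)))
  constructor
  · rintro ⟨⟨hfk, hcl⟩, -, hfq⟩
    haveI : FiniteDimensional ℂ ((LinearMap.ker (A : X →ₗ[ℂ] X)) × (LinearMap.ker (B : Y →ₗ[ℂ] Y))) :=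
      Module.Finite.equiv ekk
    haveI : FiniteDimensional ℂ (((X ⧸ LinearMap.range (A : X →ₗ[ℂ] X))) × ((Y ⧸ LinearMap.range (B : Y →ₗ[ℂ] Y)))) :=
      Module.Finite.equiv ekq
    have hkA : FiniteDimensional ℂ (LinearMap.ker (A : X →ₗ[ℂ] X)) :=
      Module.Finite.of_surjective (LinearMap.fst ℂ (LinearMap.ker (A : X →ₗ[ℂ] X)) (LinearMap.ker (B : Y →ₗ[ℂ] Y)))
        Prod.fst_surjective
    have hkB : FiniteDimensional ℂ (LinearMap.ker (B : Y →ₗ[ℂ] Y)) :=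
      Module.Finite.of_surjective (LinearMap.snd ℂ (LinearMap.ker (A : X →ₗ[ℂ] X)) (LinearMap.ker (B : Y →ₗ[ℂ] Y)))
        Prod.snd_surjective
    have hqA : FiniteDimensional ℂ (X ⧸ LinearMap.range (A : X →ₗ[ℂ] X)) :=
      Module.Finite.of_surjective
        (LinearMap.fst ℂ (X ⧸ LinearMap.range (A : X →ₗ[ℂ] X)) (Y ⧸ LinearMap.range (B : Y →ₗ[ℂ] Y))) Prod.fst_surjective
    have hqB : FiniteDimensional ℂ (Y ⧸ LinearMap.range (B : Y →ₗ[ℂ] Y)) :=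
      Module.Finite.of_surjective
        (LinearMap.snd ℂ (X ⧸ LinearMap.range (A : X →ₗ[ℂ] X)) (Y ⧸ LinearMap.range (B : Y →ₗ[ℂ] Y))) Prod.snd_surjective
    have hclA : IsClosed (LinearMap.range (A : X →ₗ[ℂ] X) : Set X) := by
      have : (LinearMap.range (A : X →ₗ[ℂ] X) : Set X) =
          (fun x : X => (x, B 0)) ⁻¹' ((LinearMap.range ((A.prodMap B : X × Y →L[ℂ] X × Y) : X × Y →ₗ[ℂ] X × Y) : Set (X × Y))) := by
        rw [hrs]
        ext x
        rw [Set.mem_preimage, Set.mem_prod]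
        simp only [SetLike.mem_coe, map_zero]
        exact ⟨fun hx => ⟨hx, Submodule.zero_mem _⟩, fun hx => hx.1⟩
      rw [this]
      exact hcl.preimage (continuous_id.prodMk continuous_const)
    have hclB : IsClosed (LinearMap.range (B : Y →ₗ[ℂ] Y) : Set Y) := by
      have : (LinearMap.range (B : Y →ₗ[ℂ] Y) : Set Y) =
          (fun y : Y => (A 0, y)) ⁻¹' ((LinearMap.range ((A.prodMap B : X × Y →L[ℂ] X × Y) : X × Y →ₗ[ℂ] X × Y) : Set (X × Y))) := by
        rw [hrs]
        ext y
        rw [Set.mem_preimage, Set.mem_prod]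
        simp only [SetLike.mem_coe, map_zero]
        exact ⟨fun hy => ⟨Submodule.zero_mem _, hy⟩, fun hy => hy.2⟩
      rw [this]
      exact hcl.preimage (continuous_const.prodMk continuous_id)
    exact ⟨⟨⟨hkA, hclA⟩, hclA, hqA⟩, ⟨hkB, hclB⟩, hclB, hqB⟩
  · rintro ⟨⟨⟨hkA, hclA⟩, -, hqA⟩, ⟨hkB, hclB⟩, -, hqB⟩
    have hfk : FiniteDimensional ℂ (LinearMap.ker ((A.prodMap B : X × Y →L[ℂ] X × Y) : X × Y →ₗ[ℂ] X × Y)) :=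
      Module.Finite.equiv ekk.symm
    have hfq : FiniteDimensional ℂ ((X × Y) ⧸ LinearMap.range ((A.prodMap B : X × Y →L[ℂ] X × Y) : X × Y →ₗ[ℂ] X × Y)) :=
      Module.Finite.equiv ekq.symm
    have hcl : IsClosed (LinearMap.range ((A.prodMap B : X × Y →L[ℂ] X × Y) : X × Y →ₗ[ℂ] X × Y) : Set (X × Y)) := by
      rw [hrs]; exact hclA.prod hclB
    exact ⟨⟨hfk, hcl⟩, hcl, hfq⟩

/-- Fredholmness is invariant under conjugation by a continuous linear equivalence. -/
lemma isFredholm_conj (e : W ≃L[ℂ] X) (B : W →L[ℂ] W) (hB : IsFredholm B) :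
    IsFredholm ((e : W →L[ℂ] X).comp (B.comp (e.symm : X →L[ℂ] W))) := by
  set C : X →L[ℂ] X := (e : W →L[ℂ] X).comp (B.comp (e.symm : X →L[ℂ] W)) with hC
  have hker : LinearMap.ker (C : X →ₗ[ℂ] X) = (LinearMap.ker (B : W →ₗ[ℂ] W)).map (e.toLinearEquiv : W →ₗ[ℂ] X) := by
    ext x
    simp only [LinearMap.mem_ker, Submodule.mem_map, hC, ContinuousLinearMap.coe_comp',
      Function.comp_apply, ContinuousLinearMap.coe_coe, ContinuousLinearEquiv.coe_toLinearEquiv]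
    constructor
    · intro h
      exact ⟨e.symm x, by simpa using h, e.apply_symm_apply x⟩
    · rintro ⟨w, hw, rfl⟩
      simp [hw]
  have hran : LinearMap.range (C : X →ₗ[ℂ] X) = (LinearMap.range (B : W →ₗ[ℂ] W)).map (e.toLinearEquiv : W →ₗ[ℂ] X) := by
    ext x
    simp only [LinearMap.mem_range, Submodule.mem_map, hC, ContinuousLinearMap.coe_comp',
      Function.comp_apply, ContinuousLinearMap.coe_coe, ContinuousLinearEquiv.coe_toLinearEquiv]
    constructor
    · rintro ⟨y, rfl⟩
      exact ⟨B (e.symm y), ⟨e.symm y, rfl⟩, rfl⟩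
    · rintro ⟨w, ⟨u, rfl⟩, rfl⟩
      exact ⟨e u, by simp⟩
  obtain ⟨⟨hfk, hcl⟩, -, hfq⟩ := hB
  have hkfd : FiniteDimensional ℂ (LinearMap.ker (C : X →ₗ[ℂ] X)) := by
    rw [hker]
    exact Module.Finite.equiv (e.toLinearEquiv.submoduleMap (LinearMap.ker (B : W →ₗ[ℂ] W)))
  have hclC : IsClosed (LinearMap.range (C : X →ₗ[ℂ] X) : Set X) := by
    have : (LinearMap.range (C : X →ₗ[ℂ] X) : Set X) = e '' (LinearMap.range (B : W →ₗ[ℂ] W) : Set W) := by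
      rw [hran]; rfl
    rw [this]
    exact e.toHomeomorph.isClosedMap _ hcl
  have hqfd : FiniteDimensional ℂ (X ⧸ LinearMap.range (C : X →ₗ[ℂ] X)) :=
    Module.Finite.equiv
      (Submodule.Quotient.equiv (LinearMap.range (B : W →ₗ[ℂ] W)) (LinearMap.range (C : X →ₗ[ℂ] X)) e.toLinearEquiv hran.symm)
  exact ⟨⟨hkfd, hclC⟩, hclC, hqfd⟩

lemma isFredholm_conj_iff (e : W ≃L[ℂ] X) (B : W →L[ℂ] W) (A : X →L[ℂ] X)
    (h : ∀ w, A (e w) = e (B w)) : IsFredholm A ↔ IsFredholm B := by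
  have hA : A = (e : W →L[ℂ] X).comp (B.comp (e.symm : X →L[ℂ] W)) := by
    ext x
    simp only [ContinuousLinearMap.coe_comp', Function.comp_apply,
      ContinuousLinearMap.coe_coe]
    calc A x = A (e (e.symm x)) := by rw [e.apply_symm_apply]
      _ = e (B (e.symm x)) := h _
  have hBeq : B = ((e.symm : X ≃L[ℂ] W) : X →L[ℂ] W).comp
      (A.comp ((e.symm.symm : W ≃L[ℂ] X) : W →L[ℂ] X)) := by
    ext w
    simp [h w]
  constructor
  · intro hA'
    rw [hBeq]
    exact isFredholm_conj e.symm A hA'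
  · intro hB'
    rw [hA]
    exact isFredholm_conj e B hB'

end Aux

/-- T is Riesz iff both restrictions T_M and T_N are Riesz, for a
decomposition X = M ⊕ N into closed T-invariant subspaces. -/
theorem stmt_3 {X : Type*} [NormedAddCommGroup X] [NormedSpace ℂ X] [CompleteSpace X]
    (T : X →L[ℂ] X) (M N : Submodule ℂ X)
    (hM : ∀ x ∈ M, T x ∈ M) (hN : ∀ x ∈ N, T x ∈ N)
    (hMc : IsClosed (M : Set X)) (hNc : IsClosed (N : Set X)) (hMN : IsCompl M N) :
    IsRiesz T ↔ IsRiesz (clmRestrict T M hM) ∧ IsRiesz (clmRestrict T N hN) := by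
  haveI : CompleteSpace M := hMc.completeSpace_coe
  haveI : CompleteSpace N := hNc.completeSpace_coe
  obtain ⟨e, hew⟩ : ∃ e : (M × N) ≃L[ℂ] X, ∀ w : M × N, e w = (w.1 : X) + (w.2 : X) := by
    have hcont : Continuous (Submodule.prodEquivOfIsCompl M N hMN) := by
      have hfe : ⇑(Submodule.prodEquivOfIsCompl M N hMN) =
          fun x : M × N => (x.1 : X) + (x.2 : X) := by
        funext x
        exact Submodule.coe_prodEquivOfIsCompl' M N hMN x
      rw [hfe]
      exact (continuous_subtype_val.comp continuous_fst).add
        (continuous_subtype_val.comp continuous_snd)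
    refine ⟨(Submodule.prodEquivOfIsCompl M N hMN).toContinuousLinearEquivOfContinuous hcont,
      fun w => ?_⟩
    rw [show (((Submodule.prodEquivOfIsCompl M N hMN).toContinuousLinearEquivOfContinuous
      hcont)) w = (Submodule.prodEquivOfIsCompl M N hMN) w from congrFun
      (LinearEquiv.coeFn_toContinuousLinearEquivOfContinuous _ hcont) w]
    exact Submodule.coe_prodEquivOfIsCompl' M N hMN w
  have hkey : ∀ lam : ℂ,
      IsFredholm (T - lam • (1 : X →L[ℂ] X)) ↔
      IsFredholm ((clmRestrict T M hM - lam • 1).prodMap (clmRestrict T N hN - lam • 1)) := by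
    intro lam
    apply isFredholm_conj_iff e
    rintro ⟨m, n⟩
    have h1 : ((clmRestrict T M hM - lam • 1).prodMap (clmRestrict T N hN - lam • 1)) (m, n)
        = (clmRestrict T M hM m - lam • m, clmRestrict T N hN n - lam • n) := rfl
    rw [h1, hew, hew]
    simp only [Submodule.coe_sub, Submodule.coe_smul]
    have hm : (clmRestrict T M hM m : X) = T m := rfl
    have hn : (clmRestrict T N hN n : X) = T n := rfl
    rw [hm, hn]
    simp only [ContinuousLinearMap.sub_apply, ContinuousLinearMap.smul_apply,
      ContinuousLinearMap.one_apply, map_add]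
  have hkey2 : ∀ lam : ℂ,
      IsFredholm (T - lam • (1 : X →L[ℂ] X)) ↔
      IsFredholm (clmRestrict T M hM - lam • 1) ∧ IsFredholm (clmRestrict T N hN - lam • 1) := by
    intro lam
    rw [hkey lam, isFredholm_prodMap_iff]
  constructor
  · intro hT
    exact ⟨fun lam hlam => ((hkey2 lam).mp (hT lam hlam)).1,
      fun lam hlam => ((hkey2 lam).mp (hT lam hlam)).2⟩
  · rintro ⟨h1, h2⟩ lam hlam
    exact (hkey2 lam).mpr ⟨h1 lam hlam, h2 lam hlam⟩
end

section
/- Suppose M_C = [[A, C],[0, B]] is generalized Drazin-Riesz invertible with a generalized Drazin-Riesz inverse S of upper triangular form [[U, W],[0, V]]. Then A and B are each generalized Drazin-Riesz invertible. -/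
noncomputable section GDRAux

section Defs0
variable {X Y : Type*} [NormedAddCommGroup X] [NormedSpace ℂ X]
  [NormedAddCommGroup Y] [NormedSpace ℂ Y]

def FinRk (F : X →L[ℂ] Y) : Prop := FiniteDimensional ℂ (LinearMap.range (F : X →ₗ[ℂ] Y))

lemma finrk_of_le {F : X →L[ℂ] Y} {p : Submodule ℂ Y} (hp : FiniteDimensional ℂ p)
    (h : LinearMap.range (F : X →ₗ[ℂ] Y) ≤ p) : FinRk F :=
  Submodule.finiteDimensional_of_le (S₂ := p) h

def AFred (T : X →L[ℂ] X) : Prop :=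
  ∃ S F₁ F₂ : X →L[ℂ] X, FinRk F₁ ∧ FinRk F₂ ∧ S * T = 1 + F₁ ∧ T * S = 1 + F₂

end Defs0


section A
variable {X Y Z : Type*} [NormedAddCommGroup X] [NormedSpace ℂ X]
  [NormedAddCommGroup Y] [NormedSpace ℂ Y] [NormedAddCommGroup Z] [NormedSpace ℂ Z]

lemma FinRk.zero : FinRk (0 : X →L[ℂ] Y) := by
  unfold FinRk
  rw [show LinearMap.range ((0 : X →L[ℂ] Y) : X →ₗ[ℂ] Y) = ⊥ from LinearMap.range_zero]
  infer_instance

lemma FinRk.compL {F : X →L[ℂ] Y} (h : FinRk F) (G : Y →L[ℂ] Z) : FinRk (G ∘L F) := by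
  haveI : FiniteDimensional ℂ (LinearMap.range (F : X →ₗ[ℂ] Y)) := h
  have : FiniteDimensional ℂ ((LinearMap.range (F : X →ₗ[ℂ] Y)).map (G : Y →ₗ[ℂ] Z)) :=
    Module.Finite.map _ _
  refine finrk_of_le this ?_
  rintro z ⟨x, rfl⟩
  exact ⟨F x, ⟨x, rfl⟩, rfl⟩

lemma FinRk.compR {F : Y →L[ℂ] Z} (h : FinRk F) (G : X →L[ℂ] Y) : FinRk (F ∘L G) := by
  refine finrk_of_le h ?_
  rintro z ⟨x, rfl⟩; exact ⟨G x, rfl⟩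

lemma FinRk.add {F G : X →L[ℂ] Y} (hF : FinRk F) (hG : FinRk G) : FinRk (F + G) := by
  haveI : FiniteDimensional ℂ (LinearMap.range (F : X →ₗ[ℂ] Y)) := hF
  haveI : FiniteDimensional ℂ (LinearMap.range (G : X →ₗ[ℂ] Y)) := hG
  have : FiniteDimensional ℂ ((LinearMap.range (F : X →ₗ[ℂ] Y) ⊔ LinearMap.range (G : X →ₗ[ℂ] Y) : Submodule ℂ Y)) := by
    infer_instance
  refine finrk_of_le this ?_
  rintro z ⟨x, rfl⟩
  exact Submodule.mem_sup.2 ⟨F x, ⟨x, rfl⟩, G x, ⟨x, rfl⟩, rfl⟩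

lemma FinRk.neg {F : X →L[ℂ] Y} (hF : FinRk F) : FinRk (-F) := by
  refine finrk_of_le hF ?_
  rintro z ⟨x, rfl⟩; exact ⟨-x, by simp⟩

lemma FinRk.sub {F G : X →L[ℂ] Y} (hF : FinRk F) (hG : FinRk G) : FinRk (F - G) := by
  rw [sub_eq_add_neg]; exact hF.add hG.neg

end A

section B
variable {R : Type*} [NormedRing R] [CompleteSpace R] (hone : ‖(1:R)‖ ≤ 1)

include hone in
lemma inv_oneSub_bound {x : R} (h2 : ‖x‖ ≤ 1/2) :
    ∃ u : Rˣ, (u : R) = 1 - x ∧ ‖((u⁻¹ : Rˣ) : R)‖ ≤ 2 := by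
  have h1 : ‖x‖ < 1 := lt_of_le_of_lt h2 (by norm_num)
  refine ⟨Units.oneSub x h1, rfl, ?_⟩
  set u := Units.oneSub x h1 with hu
  have hmul : ((u⁻¹ : Rˣ) : R) * (1 - x) = 1 := by
    have := u.inv_mul
    simpa [hu, Units.oneSub] using this
  have hsub : ((u⁻¹ : Rˣ) : R) - ((u⁻¹ : Rˣ) : R) * x = 1 := by
    rw [← hmul, mul_sub, mul_one]
  have key : ((u⁻¹ : Rˣ) : R) = 1 + ((u⁻¹ : Rˣ) : R) * x := by
    rw [← hsub]; abel
  have hn : ‖((u⁻¹ : Rˣ) : R)‖ ≤ 1 + ‖((u⁻¹ : Rˣ) : R)‖ * (1/2) := by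
    calc ‖((u⁻¹ : Rˣ) : R)‖ = ‖1 + ((u⁻¹ : Rˣ) : R) * x‖ := by rw [← key]
    _ ≤ ‖(1 : R)‖ + ‖((u⁻¹ : Rˣ) : R) * x‖ := norm_add_le _ _
    _ ≤ 1 + ‖((u⁻¹ : Rˣ) : R) * x‖ := add_le_add hone le_rfl
    _ ≤ 1 + ‖((u⁻¹ : Rˣ) : R)‖ * ‖x‖ := add_le_add le_rfl (norm_mul_le _ _)
    _ ≤ 1 + ‖((u⁻¹ : Rˣ) : R)‖ * (1/2) := by
        have := norm_nonneg ((u⁻¹ : Rˣ) : R)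
        nlinarith
  linarith

end B

section C
variable {X : Type*} [NormedAddCommGroup X] [NormedSpace ℂ X] [CompleteSpace X]

omit [CompleteSpace X] in
lemma one_norm_le : ‖(1 : X →L[ℂ] X)‖ ≤ 1 := ContinuousLinearMap.norm_id_le

lemma afred_of_two {T S₁ S₂ F₁ F₂ : X →L[ℂ] X} (h1 : FinRk F₁) (h2 : FinRk F₂)
    (e1 : S₁ * T = 1 + F₁) (e2 : T * S₂ = 1 + F₂) : AFred T := by
  have hs : S₂ = S₁ + S₁ * F₂ - F₁ * S₂ := by
    have hassoc : S₁ * (T * S₂) = (S₁ * T) * S₂ := by rw [mul_assoc]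
    rw [e1, e2] at hassoc
    rw [mul_add, mul_one, add_mul, one_mul] at hassoc
    rw [hassoc]; abel
  have hF : S₂ * T - 1 = F₁ + (S₁ * F₂) * T - (F₁ * S₂) * T := by
    nth_rewrite 1 [hs]
    rw [sub_mul, add_mul, e1, mul_assoc S₁ F₂ T, mul_assoc F₁ S₂ T,
      ← mul_assoc S₁ F₂ T, ← mul_assoc F₁ S₂ T]
    abel
  refine ⟨S₂, S₂ * T - 1, F₂, ?_, h2, by abel, e2⟩
  rw [hF]
  exact (h1.add ((h2.compL S₁).compR T)).sub ((h1.compR S₂).compR T)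

lemma afred_shift {T S F₁ F₂ : X →L[ℂ] X} (h1 : FinRk F₁) (h2 : FinRk F₂)
    (e1 : S * T = 1 + F₁) (e2 : T * S = 1 + F₂) {δ : ℂ} (hδ : ‖δ • S‖ ≤ 1/2) :
    AFred (T + δ • 1) := by
  obtain ⟨u, hu, hub⟩ := inv_oneSub_bound (one_norm_le (X := X)) (x := -(δ • S)) (by
    rwa [norm_neg])
  have huv : (u : X →L[ℂ] X) = 1 + δ • S := by rw [hu, sub_neg_eq_add]
  have hl : S * (T + δ • 1) = (u : X →L[ℂ] X) + F₁ := by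
    rw [mul_add, e1, huv]
    have : S * (δ • (1 : X →L[ℂ] X)) = δ • S := by
      rw [mul_smul_comm, mul_one]
    rw [this]; abel
  have hr : (T + δ • 1) * S = (u : X →L[ℂ] X) + F₂ := by
    rw [add_mul, e2, huv]
    have : (δ • (1 : X →L[ℂ] X)) * S = δ • S := by
      rw [smul_mul_assoc, one_mul]
    rw [this]; abel
  refine afred_of_two (T := T + δ • 1) (S₁ := (u⁻¹ : (X →L[ℂ] X)ˣ) * S)
    (S₂ := S * (u⁻¹ : (X →L[ℂ] X)ˣ))
    (F₁ := (u⁻¹ : (X →L[ℂ] X)ˣ) * F₁) (F₂ := F₂ * (u⁻¹ : (X →L[ℂ] X)ˣ))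
    (h1.compL _) (h2.compR _) ?_ ?_
  · rw [mul_assoc, hl, mul_add, Units.inv_mul]
  · rw [← mul_assoc, hr, add_mul, Units.mul_inv]

lemma afred_of_big (A : X →L[ℂ] X) {lam : ℂ} (h : ‖A‖ < ‖lam‖) : AFred (A - lam • 1) := by
  have hlam : lam ≠ 0 := by
    intro h0; rw [h0] at h; simp at h; exact absurd h (not_lt.2 (norm_nonneg _))
  have ht : ‖lam⁻¹ • A‖ < 1 := by
    rw [norm_smul lam⁻¹ A, norm_inv]
    rw [inv_mul_lt_iff₀ (lt_of_le_of_lt (norm_nonneg A) h), mul_one]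
    exact h
  set u := Units.oneSub (lam⁻¹ • A) ht with hu
  have huv : (u : X →L[ℂ] X) = 1 - lam⁻¹ • A := rfl
  have hfact : A - lam • 1 = (-lam) • (u : X →L[ℂ] X) := by
    rw [huv, smul_sub, smul_smul,
      show -lam * lam⁻¹ = -1 by field_simp]
    module
  refine ⟨(-lam)⁻¹ • ((u⁻¹ : (X →L[ℂ] X)ˣ) : X →L[ℂ] X), 0, 0, FinRk.zero, FinRk.zero, ?_, ?_⟩
  · rw [hfact, smul_mul_smul_comm, inv_mul_cancel₀ (neg_ne_zero.2 hlam), one_smul,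
      Units.inv_mul, add_zero]
  · rw [hfact, smul_mul_smul_comm, mul_inv_cancel₀ (neg_ne_zero.2 hlam), one_smul,
      Units.mul_inv, add_zero]

end C

section Big
variable {X : Type*} [NormedAddCommGroup X] [NormedSpace ℂ X] [CompleteSpace X]

lemma AFred.isFredholm {T : X →L[ℂ] X} (h : AFred T) : IsFredholm T := by
  obtain ⟨S, F₁, F₂, h1, h2, e1, e2⟩ := h
  haveI hF1 : FiniteDimensional ℂ (LinearMap.range ((-F₁ : X →L[ℂ] X) : X →ₗ[ℂ] X)) := by
    refine finrk_of_le (F := -F₁) h1 ?_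
    rintro z ⟨x, rfl⟩; exact ⟨-x, by simp⟩
  -- kernel finite dimensional
  haveI hker : FiniteDimensional ℂ (LinearMap.ker (T : X →ₗ[ℂ] X)) := by
    refine Submodule.finiteDimensional_of_le (S₂ := LinearMap.range ((-F₁ : X →L[ℂ] X) : X →ₗ[ℂ] X)) ?_
    intro x hx
    have hx0 : T x = 0 := hx
    have ex := congrArg (fun f : X →L[ℂ] X => f x) e1
    simp only [ContinuousLinearMap.mul_apply, ContinuousLinearMap.add_apply,
      ContinuousLinearMap.one_apply, hx0, map_zero] at ex
    exact ⟨x, by show (-F₁) x = x; rw [ContinuousLinearMap.neg_apply]; exact neg_eq_of_add_eq_zero_left ex.symm⟩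
  -- cokernel finite dimensional
  have hsup : LinearMap.range (T : X →ₗ[ℂ] X) ⊔ LinearMap.range (F₂ : X →ₗ[ℂ] X) = ⊤ := by
    rw [eq_top_iff]
    rintro x -
    have ex := congrArg (fun f : X →L[ℂ] X => f x) e2
    simp only [ContinuousLinearMap.mul_apply, ContinuousLinearMap.add_apply,
      ContinuousLinearMap.one_apply] at ex
    refine Submodule.mem_sup.2 ⟨T (S x), LinearMap.mem_range_self _ _,
      -(F₂ x), Submodule.neg_mem _ (LinearMap.mem_range_self _ _), ?_⟩
    rw [ex]; abel
  haveI hq : FiniteDimensional ℂ (X ⧸ LinearMap.range (T : X →ₗ[ℂ] X)) := by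
    haveI : FiniteDimensional ℂ (LinearMap.range (F₂ : X →ₗ[ℂ] X)) := h2
    refine Module.Finite.of_surjective
      (((LinearMap.range (T : X →ₗ[ℂ] X)).mkQ).comp (LinearMap.range (F₂ : X →ₗ[ℂ] X)).subtype) ?_
    intro q
    obtain ⟨x, rfl⟩ := Submodule.Quotient.mk_surjective _ q
    have : x ∈ LinearMap.range (T : X →ₗ[ℂ] X) ⊔ LinearMap.range (F₂ : X →ₗ[ℂ] X) := by rw [hsup]; trivial
    obtain ⟨t, ht, f, hf, rfl⟩ := Submodule.mem_sup.1 this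
    refine ⟨⟨f, hf⟩, ?_⟩
    simp only [LinearMap.comp_apply, Submodule.subtype_apply, Submodule.mkQ_apply]
    rw [Submodule.Quotient.eq]
    have : f - (t + f) = -t := by abel
    rw [this]
    exact Submodule.neg_mem _ ht
  -- closed range
  have hkerCC : (LinearMap.ker (T : X →ₗ[ℂ] X)).ClosedComplemented :=
    Submodule.ClosedComplemented.of_finiteDimensional _
  obtain ⟨X₀, hX₀c, hcompl⟩ := hkerCC.exists_isClosed_isCompl
  obtain ⟨Fc, hFc⟩ := Submodule.exists_isCompl (LinearMap.range (T : X →ₗ[ℂ] X))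
  haveI : FiniteDimensional ℂ Fc :=
    (Submodule.quotientEquivOfIsCompl _ _ hFc).finiteDimensional
  haveI : CompleteSpace X₀ := hX₀c.completeSpace_coe
  set Φ : (X₀ × Fc) →L[ℂ] X := (T.comp X₀.subtypeL).coprod Fc.subtypeL with hΦ
  have hΦap : ∀ (x₀ : X₀) (f : Fc), Φ (x₀, f) = T ↑x₀ + ↑f := fun _ _ => rfl
  have hzero : ∀ p : X₀ × Fc, Φ p = 0 → p = 0 := by
    rintro ⟨x₀, f⟩ hp
    rw [hΦap] at hp
    have hmem : -(↑f : X) ∈ LinearMap.range (T : X →ₗ[ℂ] X) ⊓ Fc := by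
      constructor
      · exact ⟨↑x₀, eq_neg_of_add_eq_zero_left hp⟩
      · exact Submodule.neg_mem _ f.2
    rw [hFc.inf_eq_bot] at hmem
    have hf0 : (↑f : X) = 0 := by simpa using hmem
    have hx0 : (↑x₀ : X) ∈ LinearMap.ker (T : X →ₗ[ℂ] X) ⊓ X₀ := by
      constructor
      · have : T ↑x₀ = 0 := by rw [← hp, hf0]; abel
        exact this
      · exact x₀.2
    rw [hcompl.inf_eq_bot] at hx0
    have : (↑x₀ : X) = 0 := hx0
    ext
    · exact this
    · exact hf0
  have hdecomp : ∀ x : X, ∃ x₀ : X₀, T ↑x₀ = T x := by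
    intro x
    have : x ∈ LinearMap.ker (T : X →ₗ[ℂ] X) ⊔ X₀ := by rw [hcompl.sup_eq_top]; trivial
    obtain ⟨k, hk, x₀, hx₀, rfl⟩ := Submodule.mem_sup.1 this
    exact ⟨⟨x₀, hx₀⟩, by rw [map_add, show T k = 0 from hk]; simp⟩
  have hbij : Function.Bijective Φ := by
    constructor
    · intro p q hpq
      have : Φ (p - q) = 0 := by rw [map_sub, hpq, sub_self]
      have := hzero _ this
      rwa [sub_eq_zero] at this
    · intro x
      have : x ∈ LinearMap.range (T : X →ₗ[ℂ] X) ⊔ Fc := by rw [hFc.sup_eq_top]; trivial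
      obtain ⟨t, ⟨x', rfl⟩, f, hf, rfl⟩ := Submodule.mem_sup.1 this
      obtain ⟨x₀, hx₀⟩ := hdecomp x'
      exact ⟨(x₀, ⟨f, hf⟩), by rw [hΦap, hx₀]; rfl⟩
  set e := (LinearEquiv.ofBijective (Φ : (X₀ × Fc) →ₗ[ℂ] X) hbij) with he
  have hecont : Continuous e := Φ.continuous
  set eL := e.toContinuousLinearEquivOfContinuous hecont with heL
  have hclosed : IsClosed (LinearMap.range (T : X →ₗ[ℂ] X) : Set X) := by
    have hset : (LinearMap.range (T : X →ₗ[ℂ] X) : Set X) = eL '' (Set.univ ×ˢ {0}) := by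
      ext x
      constructor
      · rintro ⟨x', rfl⟩
        obtain ⟨x₀, hx₀⟩ := hdecomp x'
        refine ⟨(x₀, 0), ⟨trivial, rfl⟩, ?_⟩
        show Φ (x₀, 0) = T x'
        rw [hΦap]
        simpa using hx₀
      · rintro ⟨⟨x₀, f⟩, ⟨-, hf⟩, rfl⟩
        have hf0 : f = 0 := hf
        refine ⟨↑x₀, ?_⟩
        show T ↑x₀ = Φ (x₀, f)
        rw [hΦap, hf0]
        simp
    rw [hset]
    exact (eL.toHomeomorph.isClosed_image).2 (isClosed_univ.prod isClosed_singleton)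
  exact ⟨⟨hker, hclosed⟩, ⟨hclosed, hq⟩⟩

lemma IsFredholm.afred {T : X →L[ℂ] X} (h : IsFredholm T) : AFred T := by
  obtain ⟨⟨hker, hcl⟩, ⟨-, hq⟩⟩ := h
  haveI := hker
  haveI := hq
  have hkerCC : (LinearMap.ker (T : X →ₗ[ℂ] X)).ClosedComplemented :=
    Submodule.ClosedComplemented.of_finiteDimensional _
  obtain ⟨X₀, hX₀c, hcompl⟩ := hkerCC.exists_isClosed_isCompl
  have hranCC : (LinearMap.range (T : X →ₗ[ℂ] X)).ClosedComplemented :=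
    Submodule.ClosedComplemented.of_quotient_finiteDimensional hcl
  obtain ⟨πr, hπr⟩ := hranCC
  haveI : CompleteSpace X₀ := hX₀c.completeSpace_coe
  haveI : CompleteSpace (LinearMap.range (T : X →ₗ[ℂ] X)) := hcl.completeSpace_coe
  set T₀ : X₀ →L[ℂ] (LinearMap.range (T : X →ₗ[ℂ] X)) :=
    (T.comp X₀.subtypeL).codRestrict _ (fun x => LinearMap.mem_range_self _ _) with hT₀
  have hT₀ap : ∀ x₀ : X₀, (↑(T₀ x₀) : X) = T ↑x₀ := fun _ => rfl
  have hdecomp : ∀ x : X, ∃ x₀ : X₀, T ↑x₀ = T x ∧ x - ↑x₀ ∈ LinearMap.ker (T : X →ₗ[ℂ] X) := by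
    intro x
    have : x ∈ LinearMap.ker (T : X →ₗ[ℂ] X) ⊔ X₀ := by rw [hcompl.sup_eq_top]; trivial
    obtain ⟨k, hk, x₀, hx₀, rfl⟩ := Submodule.mem_sup.1 this
    refine ⟨⟨x₀, hx₀⟩, by rw [map_add, show T k = 0 from hk]; simp, by simpa using hk⟩
  have hbij : Function.Bijective T₀ := by
    constructor
    · intro p q hpq
      have hker0 : (↑(p - q) : X) ∈ LinearMap.ker (T : X →ₗ[ℂ] X) ⊓ X₀ := by
        constructor
        · have : T ↑p = T ↑q := by
            rw [← hT₀ap, ← hT₀ap, hpq]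
          have : T ((↑p : X) - ↑q) = 0 := by rw [map_sub, this, sub_self]
          exact this
        · exact (p - q).2
      rw [hcompl.inf_eq_bot] at hker0
      have : (↑(p - q) : X) = 0 := hker0
      have : p - q = 0 := Subtype.ext this
      rwa [sub_eq_zero] at this
    · rintro ⟨y, x, rfl⟩
      obtain ⟨x₀, hx₀, -⟩ := hdecomp x
      exact ⟨x₀, Subtype.ext (by rw [hT₀ap]; exact hx₀)⟩
  set e := (LinearEquiv.ofBijective (T₀ : X₀ →ₗ[ℂ] (LinearMap.range (T : X →ₗ[ℂ] X))) hbij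
    ).toContinuousLinearEquivOfContinuous T₀.continuous with he
  have heap : ∀ x₀ : X₀, e x₀ = T₀ x₀ := fun _ => rfl
  set S : X →L[ℂ] X := X₀.subtypeL ∘L ((e.symm : (LinearMap.range (T : X →ₗ[ℂ] X)) →L[ℂ] X₀) ∘L πr)
    with hS
  have hSap : ∀ y : X, S y = ↑(e.symm (πr y)) := fun _ => rfl
  -- T ∘ S = πr (as X-valued)
  have hTS : ∀ y : X, T (S y) = ↑(πr y) := by
    intro y
    rw [hSap, ← hT₀ap, ← heap, e.apply_symm_apply]
  -- S ∘ T
  have hST : ∀ x : X, S (T x) - x ∈ LinearMap.ker (T : X →ₗ[ℂ] X) := by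
    intro x
    obtain ⟨x₀, hx₀, hk⟩ := hdecomp x
    have h1 : πr (T x) = ⟨T x, LinearMap.mem_range_self _ _⟩ :=
      hπr ⟨T x, LinearMap.mem_range_self _ _⟩
    have h2 : (⟨T x, LinearMap.mem_range_self _ _⟩ : LinearMap.range (T : X →ₗ[ℂ] X)) = e x₀ := by
      apply Subtype.ext
      rw [heap, hT₀ap, hx₀]
    have h3 : S (T x) = ↑x₀ := by
      rw [hSap, h1, h2, e.symm_apply_apply]
    rw [h3]
    have : (↑x₀ : X) - x = -(x - ↑x₀) := by abel
    rw [this]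
    exact Submodule.neg_mem _ hk
  refine ⟨S, S * T - 1, T * S - 1, ?_, ?_, by abel, by abel⟩
  · refine finrk_of_le hker ?_
    rintro z ⟨x, rfl⟩
    have : (S * T - 1) x = S (T x) - x := rfl
    show (S * T - 1) x ∈ _
    rw [this]
    exact hST x
  · -- range (T*S - 1) embeds into the quotient
    show FiniteDimensional ℂ (LinearMap.range ((T * S - 1 : X →L[ℂ] X) : X →ₗ[ℂ] X))
    refine FiniteDimensional.of_injective
      (((LinearMap.range (T : X →ₗ[ℂ] X)).mkQ).comp (LinearMap.range ((T * S - 1 : X →L[ℂ] X) : X →ₗ[ℂ] X)).subtype) ?_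
    rintro ⟨v, hv⟩ ⟨w, hw⟩ hvw
    simp only [LinearMap.comp_apply, Submodule.subtype_apply, Submodule.mkQ_apply] at hvw
    rw [Submodule.Quotient.eq] at hvw
    -- v - w ∈ range T and v - w ∈ range (T*S-1)-type elements are fixed by πr-vanishing
    -- show v - w = 0
    have hval : ∀ u : X, u ∈ LinearMap.range ((T * S - 1 : X →L[ℂ] X) : X →ₗ[ℂ] X) → u ∈ LinearMap.range (T : X →ₗ[ℂ] X) → u = 0 := by
      rintro u ⟨y, rfl⟩ humem
      have hu : (T * S - 1) y = ↑(πr y) - y := by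
        have : (T * S - 1) y = T (S y) - y := rfl
        rw [this, hTS]
      have hπu : πr ((T * S - 1) y) = 0 := by
        rw [hu, map_sub]
        have : πr ((↑(πr y) : X)) = πr y := hπr (πr y)
        rw [this, sub_self]
      have : πr ((T * S - 1) y) = ⟨(T * S - 1) y, humem⟩ := hπr ⟨(T * S - 1) y, humem⟩
      rw [hπu] at this
      have := congrArg (Subtype.val) this
      simpa using this.symm
    have hsubmem : v - w ∈ LinearMap.range ((T * S - 1 : X →L[ℂ] X) : X →ₗ[ℂ] X) := Submodule.sub_mem _ hv hw
    have := hval (v - w) hsubmem hvw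
    apply Subtype.ext
    linear_combination (norm := abel) this

end Big

section UT
variable {X Y : Type*} [NormedAddCommGroup X] [NormedSpace ℂ X]
  [NormedAddCommGroup Y] [NormedSpace ℂ Y]

lemma ut_apply (A : X →L[ℂ] X) (B : Y →L[ℂ] Y) (C : Y →L[ℂ] X) (z : X × Y) :
    upperTriangular A B C z = (A z.1 + C z.2, B z.2) := rfl

lemma ut_mul (A U : X →L[ℂ] X) (B V : Y →L[ℂ] Y) (C W : Y →L[ℂ] X) :
    upperTriangular A B C * upperTriangular U V W =
      upperTriangular (A * U) (B * V) (A ∘L W + C ∘L V) := by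
  refine ContinuousLinearMap.ext fun z => ?_
  simp only [ContinuousLinearMap.mul_apply, ut_apply, ContinuousLinearMap.add_apply,
    ContinuousLinearMap.comp_apply, map_add]
  exact Prod.ext (by abel) rfl

lemma ut_sub (A A' : X →L[ℂ] X) (B B' : Y →L[ℂ] Y) (C C' : Y →L[ℂ] X) :
    upperTriangular A B C - upperTriangular A' B' C' =
      upperTriangular (A - A') (B - B') (C - C') := by
  refine ContinuousLinearMap.ext fun z => ?_
  simp only [ContinuousLinearMap.sub_apply, ut_apply]
  exact Prod.ext (by simp; abel) (by simp)

lemma ut_smul_one (lam : ℂ) :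
    (lam • 1 : (X × Y) →L[ℂ] (X × Y)) =
      upperTriangular (lam • 1) (lam • 1) 0 := by
  refine ContinuousLinearMap.ext fun z => ?_
  simp only [ContinuousLinearMap.smul_apply, ContinuousLinearMap.one_apply, ut_apply,
    ContinuousLinearMap.zero_apply, add_zero]
  exact Prod.ext rfl rfl

lemma ut_eq_components {A A' : X →L[ℂ] X} {B B' : Y →L[ℂ] Y} {C C' : Y →L[ℂ] X}
    (h : upperTriangular A B C = upperTriangular A' B' C') :
    A = A' ∧ B = B' ∧ C = C' := by
  refine ⟨?_, ?_, ?_⟩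
  · refine ContinuousLinearMap.ext fun x => ?_
    have := congrArg (fun f : (X × Y) →L[ℂ] (X × Y) => (f (x, 0)).1) h
    simpa [ut_apply] using this
  · refine ContinuousLinearMap.ext fun y => ?_
    have := congrArg (fun f : (X × Y) →L[ℂ] (X × Y) => (f (0, y)).2) h
    simpa [ut_apply] using this
  · refine ContinuousLinearMap.ext fun y => ?_
    have := congrArg (fun f : (X × Y) →L[ℂ] (X × Y) => (f (0, y)).1) h
    simpa [ut_apply] using this

lemma norm_inl_le : ‖ContinuousLinearMap.inl ℂ X Y‖ ≤ 1 := by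
  refine ContinuousLinearMap.opNorm_le_bound _ zero_le_one fun x => ?_
  simp [Prod.norm_def, norm_nonneg]

lemma norm_inr_le : ‖ContinuousLinearMap.inr ℂ X Y‖ ≤ 1 := by
  refine ContinuousLinearMap.opNorm_le_bound _ zero_le_one fun x => ?_
  simp [Prod.norm_def, norm_nonneg]

lemma norm_fst_le' : ‖ContinuousLinearMap.fst ℂ X Y‖ ≤ 1 := by
  refine ContinuousLinearMap.opNorm_le_bound _ zero_le_one fun z => ?_
  simpa using norm_fst_le z

lemma norm_snd_le' : ‖ContinuousLinearMap.snd ℂ X Y‖ ≤ 1 := by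
  refine ContinuousLinearMap.opNorm_le_bound _ zero_le_one fun z => ?_
  simpa using norm_snd_le z

end UT


lemma aux_arith1 {c : ℝ} (hc1 : 1 ≤ c) : (8 * c ^ 2)⁻¹ * c ≤ 1/2 := by
  have hcpos : (0:ℝ) < c := by linarith
  have h1 : (8 * c ^ 2)⁻¹ * c = (8 * c)⁻¹ := by field_simp
  rw [h1]
  have h2 : (2:ℝ) ≤ 8 * c := by nlinarith
  calc (8 * c)⁻¹ ≤ (2:ℝ)⁻¹ := by
        apply inv_anti₀ (by norm_num) h2
  _ = 1/2 := by norm_num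

lemma aux_arith2 {c : ℝ} (hc1 : 1 ≤ c) : (8 * c ^ 2)⁻¹ * (2 * c) ≤ 1/2 := by
  have hcpos : (0:ℝ) < c := by linarith
  have h1 : (8 * c ^ 2)⁻¹ * (2 * c) = (4 * c)⁻¹ := by field_simp; ring
  rw [h1]
  have h2 : (2:ℝ) ≤ 4 * c := by nlinarith
  calc (4 * c)⁻¹ ≤ (2:ℝ)⁻¹ := by
        apply inv_anti₀ (by norm_num) h2
  _ = 1/2 := by norm_num


section Closed
variable {X Y : Type*} [NormedAddCommGroup X] [NormedSpace ℂ X] [CompleteSpace X]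
  [NormedAddCommGroup Y] [NormedSpace ℂ Y] [CompleteSpace Y]

lemma ut_closedA (A : X →L[ℂ] X) (B : Y →L[ℂ] Y) (C : Y →L[ℂ] X) (lam0 : ℂ)
    (hW : AFred (upperTriangular A B C - lam0 • 1)) :
    ∃ ε > 0, ∀ lam : ℂ, ‖lam - lam0‖ < ε → AFred (A - lam • 1) → AFred (A - lam0 • 1) := by
  obtain ⟨W, G₁, G₂, g1, g2, f1, f2⟩ := hW
  set N : (X × Y) →L[ℂ] (X × Y) := upperTriangular A B C - lam0 • 1 with hNdef
  set c : ℝ := ‖W‖ + 1 with hcdef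
  have hWc : ‖W‖ ≤ c := by rw [hcdef]; linarith
  have hc1 : 1 ≤ c := by rw [hcdef]; linarith [norm_nonneg W]
  have hcpos : (0:ℝ) < c := by linarith
  refine ⟨(8 * c ^ 2)⁻¹, by positivity, ?_⟩
  intro lam hdist hA
  obtain ⟨S, F₁, F₂, h1, h2, e1, e2⟩ := hA
  set δ : ℂ := lam - lam0 with hδdef
  set T : X →L[ℂ] X := A - lam • 1 with hTdef
  have hshift : T + δ • 1 = A - lam0 • 1 := by
    rw [hTdef, hδdef, sub_smul]; abel
  set j := ContinuousLinearMap.inl ℂ X Y with hjdef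
  set q := ContinuousLinearMap.fst ℂ X Y with hqdef
  set z : (X × Y) →L[ℂ] (X × Y) := j ∘L (S ∘L q) with hzdef
  have step1 : N * z = j ∘L q + j ∘L (F₂ ∘L q) + δ • z := by
    refine ContinuousLinearMap.ext fun w => ?_
    have hTS : A (S w.1) - lam • (S w.1) = w.1 + F₂ w.1 := by
      have := congrArg (fun f : X →L[ℂ] X => f w.1) e2
      simpa [ContinuousLinearMap.mul_apply, hTdef] using this
    have hA' : A (S w.1) = w.1 + F₂ w.1 + lam • (S w.1) := by
      rw [← hTS]; abel
    show N (z w) = _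
    have hzw : z w = (S w.1, 0) := by
      simp [hzdef, hjdef, hqdef]
    rw [hzw]
    simp only [hNdef, ContinuousLinearMap.sub_apply, ut_apply,
      ContinuousLinearMap.smul_apply, ContinuousLinearMap.one_apply,
      ContinuousLinearMap.add_apply, ContinuousLinearMap.comp_apply, map_zero, add_zero]
    have h1c : j (q w) = (w.1, 0) := by simp [hjdef, hqdef]
    have h2c : j (F₂ (q w)) = (F₂ w.1, 0) := by simp [hjdef, hqdef]
    rw [h1c, h2c, hzw]
    refine Prod.ext ?_ ?_
    · show A (S w.1) - lam0 • (S w.1) = w.1 + F₂ w.1 + δ • (S w.1)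
      rw [hA', hδdef, sub_smul]; abel
    · simp
  have step4 : (1 - δ • W) * z = W * (j ∘L q) + (W * (j ∘L (F₂ ∘L q)) - G₁ * z) := by
    have h2' : W * (j ∘L q) + W * (j ∘L (F₂ ∘L q)) + δ • (W * z) = z + G₁ * z := by
      have : W * (N * z) = z + G₁ * z := by
        rw [← mul_assoc, f1, add_mul, one_mul]
      rw [step1, mul_add, mul_add, mul_smul_comm] at this
      exact this
    calc (1 - δ • W) * z = z - δ • (W * z) := by
          rw [sub_mul, one_mul, smul_mul_assoc]
    _ = (z + G₁ * z) - G₁ * z - δ • (W * z) := by abel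
    _ = (W * (j ∘L q) + W * (j ∘L (F₂ ∘L q)) + δ • (W * z)) - G₁ * z - δ • (W * z) := by
          rw [h2']
    _ = W * (j ∘L q) + (W * (j ∘L (F₂ ∘L q)) - G₁ * z) := by abel
  have hδW : ‖δ • W‖ ≤ 1/2 := by
    rw [norm_smul δ W]
    have hd : ‖δ‖ ≤ (8 * c ^ 2)⁻¹ := le_of_lt hdist
    calc ‖δ‖ * ‖W‖ ≤ (8 * c ^ 2)⁻¹ * c :=
          mul_le_mul hd hWc (norm_nonneg _) (by positivity)
    _ ≤ 1/2 := aux_arith1 hc1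
  obtain ⟨u, hu, hub⟩ := inv_oneSub_bound (one_norm_le (X := X × Y)) hδW
  have step6 : z = (↑u⁻¹ : (X × Y) →L[ℂ] (X × Y)) * (W * (j ∘L q))
      + (↑u⁻¹ : (X × Y) →L[ℂ] (X × Y)) * (W * (j ∘L (F₂ ∘L q)) - G₁ * z) := by
    have huz : (↑u : (X × Y) →L[ℂ] (X × Y)) * z
        = W * (j ∘L q) + (W * (j ∘L (F₂ ∘L q)) - G₁ * z) := by
      rw [hu]; exact step4
    calc z = ↑u⁻¹ * (↑u * z) := by rw [← mul_assoc, Units.inv_mul, one_mul]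
    _ = _ := by rw [huz, mul_add]
  set Sstar : X →L[ℂ] X := q ∘L (((↑u⁻¹ : (X × Y) →L[ℂ] (X × Y)) * W) ∘L j) with hSsdef
  set Ffin : X →L[ℂ] X :=
    q ∘L (((↑u⁻¹ : (X × Y) →L[ℂ] (X × Y)) * (W * (j ∘L (F₂ ∘L q)) - G₁ * z)) ∘L j) with hFfdef
  have hFfin : FinRk Ffin := by
    have hcore : FinRk (W * (j ∘L (F₂ ∘L q)) - G₁ * z) :=
      (((h2.compR q).compL j).compL W).sub (g1.compR z)
    exact ((hcore.compL _).compR j).compL q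
  have hSsum : S = Sstar + Ffin := by
    refine ContinuousLinearMap.ext fun x => ?_
    have h6 := congrArg (fun f : (X × Y) →L[ℂ] (X × Y) => f (j x)) step6
    simp only [ContinuousLinearMap.add_apply] at h6
    have hS : S x = q (z (j x)) := by simp [hzdef, hjdef, hqdef]
    have hqj : q (j x) = x := by simp [hjdef, hqdef]
    have hA1 : q (((↑u⁻¹ : (X × Y) →L[ℂ] (X × Y)) * (W * (j ∘L q))) (j x)) = Sstar x := by
      simp only [hSsdef, ContinuousLinearMap.mul_apply, ContinuousLinearMap.comp_apply]
      rw [hqj]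
    rw [ContinuousLinearMap.add_apply, hS, h6, map_add, hA1]
    rfl
  have hSsnorm : ‖Sstar‖ ≤ 2 * c := by
    have hb1 : ‖((↑u⁻¹ : (X × Y) →L[ℂ] (X × Y)) * W)‖ ≤ 2 * c := by
      calc ‖((↑u⁻¹ : (X × Y) →L[ℂ] (X × Y)) * W)‖
          ≤ ‖(↑u⁻¹ : (X × Y) →L[ℂ] (X × Y))‖ * ‖W‖ := norm_mul_le _ _
      _ ≤ 2 * c := mul_le_mul hub hWc (norm_nonneg _) (by norm_num)
    have hb2 : ‖((↑u⁻¹ : (X × Y) →L[ℂ] (X × Y)) * W) ∘L j‖ ≤ (2 * c) * 1 :=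
      le_trans (ContinuousLinearMap.opNorm_comp_le _ _)
        (mul_le_mul hb1 norm_inl_le (norm_nonneg _) (by positivity))
    rw [hSsdef]
    calc ‖q ∘L (((↑u⁻¹ : (X × Y) →L[ℂ] (X × Y)) * W) ∘L j)‖
        ≤ ‖q‖ * ‖(((↑u⁻¹ : (X × Y) →L[ℂ] (X × Y)) * W) ∘L j)‖ :=
          ContinuousLinearMap.opNorm_comp_le _ _
    _ ≤ 1 * ((2 * c) * 1) :=
          mul_le_mul norm_fst_le' hb2 (norm_nonneg _) zero_le_one
    _ = 2 * c := by ring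
  have hSd : Sstar = S - Ffin := by rw [hSsum]; abel
  have e1' : Sstar * T = 1 + (F₁ - Ffin * T) := by
    rw [hSd, sub_mul, e1]; abel
  have e2' : T * Sstar = 1 + (F₂ - T * Ffin) := by
    rw [hSd, mul_sub, e2]; abel
  have hδS : ‖δ • Sstar‖ ≤ 1/2 := by
    rw [norm_smul δ Sstar]
    calc ‖δ‖ * ‖Sstar‖ ≤ (8 * c ^ 2)⁻¹ * (2 * c) :=
          mul_le_mul (le_of_lt hdist) hSsnorm (norm_nonneg _) (by positivity)
    _ ≤ 1/2 := aux_arith2 hc1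
  have hres := afred_shift (h1.sub (hFfin.compR T)) (h2.sub (hFfin.compL T)) e1' e2' hδS
  rwa [hshift] at hres


lemma ut_closedB (A : X →L[ℂ] X) (B : Y →L[ℂ] Y) (C : Y →L[ℂ] X) (lam0 : ℂ)
    (hW : AFred (upperTriangular A B C - lam0 • 1)) :
    ∃ ε > 0, ∀ lam : ℂ, ‖lam - lam0‖ < ε → AFred (B - lam • 1) → AFred (B - lam0 • 1) := by
  obtain ⟨W, G₁, G₂, g1, g2, f1, f2⟩ := hW
  set N : (X × Y) →L[ℂ] (X × Y) := upperTriangular A B C - lam0 • 1 with hNdef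
  set c : ℝ := ‖W‖ + 1 with hcdef
  have hWc : ‖W‖ ≤ c := by rw [hcdef]; linarith
  have hc1 : 1 ≤ c := by rw [hcdef]; linarith [norm_nonneg W]
  have hcpos : (0:ℝ) < c := by linarith
  refine ⟨(8 * c ^ 2)⁻¹, by positivity, ?_⟩
  intro lam hdist hA
  obtain ⟨S, F₁, F₂, h1, h2, e1, e2⟩ := hA
  set δ : ℂ := lam - lam0 with hδdef
  set T : Y →L[ℂ] Y := B - lam • 1 with hTdef
  have hshift : T + δ • 1 = B - lam0 • 1 := by
    rw [hTdef, hδdef, sub_smul]; abel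
  set j := ContinuousLinearMap.inr ℂ X Y with hjdef
  set q := ContinuousLinearMap.snd ℂ X Y with hqdef
  set z : (X × Y) →L[ℂ] (X × Y) := j ∘L (S ∘L q) with hzdef
  have step1 : z * N = j ∘L q + j ∘L (F₁ ∘L q) + δ • z := by
    refine ContinuousLinearMap.ext fun w => ?_
    have hTS : S (B w.2 - lam • w.2) = w.2 + F₁ w.2 := by
      have := congrArg (fun f : Y →L[ℂ] Y => f w.2) e1
      simpa [ContinuousLinearMap.mul_apply, hTdef] using this
    have key : S (B w.2 - lam0 • w.2) = w.2 + F₁ w.2 + δ • S w.2 := by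
      have hsplit : B w.2 - lam0 • w.2 = (B w.2 - lam • w.2) + δ • w.2 := by
        rw [hδdef, sub_smul]; abel
      rw [hsplit, map_add, hTS, map_smul]
    have hqN : q (N w) = B w.2 - lam0 • w.2 := by
      simp [hNdef, hqdef, ut_apply]
    show z (N w) = _
    have hzNw : z (N w) = (0, S (B w.2 - lam0 • w.2)) := by
      rw [hzdef]
      simp only [ContinuousLinearMap.comp_apply]
      rw [hqN]
      simp [hjdef]
    rw [hzNw, key]
    have h1c : (j ∘L q) w = ((0 : X), w.2) := by simp [hjdef, hqdef]
    have h2c : (j ∘L (F₁ ∘L q)) w = ((0 : X), F₁ w.2) := by simp [hjdef, hqdef]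
    have h3c : (δ • z) w = ((0 : X), δ • S w.2) := by
      simp [hzdef, hjdef, hqdef, Prod.smul_def]
    rw [ContinuousLinearMap.add_apply, ContinuousLinearMap.add_apply, h1c, h2c, h3c]
    refine Prod.ext (by simp) rfl
  have step4 : z * (1 - δ • W) = (j ∘L q) * W + ((j ∘L (F₁ ∘L q)) * W - z * G₂) := by
    have h2' : (j ∘L q) * W + (j ∘L (F₁ ∘L q)) * W + δ • (z * W) = z + z * G₂ := by
      have : (z * N) * W = z + z * G₂ := by
        rw [mul_assoc, f2, mul_add, mul_one]
      rw [step1, add_mul, add_mul, smul_mul_assoc] at this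
      exact this
    calc z * (1 - δ • W) = z - δ • (z * W) := by
          rw [mul_sub, mul_one, mul_smul_comm]
    _ = (z + z * G₂) - z * G₂ - δ • (z * W) := by abel
    _ = ((j ∘L q) * W + (j ∘L (F₁ ∘L q)) * W + δ • (z * W)) - z * G₂ - δ • (z * W) := by
          rw [h2']
    _ = (j ∘L q) * W + ((j ∘L (F₁ ∘L q)) * W - z * G₂) := by abel
  have hδW : ‖δ • W‖ ≤ 1/2 := by
    rw [norm_smul δ W]
    have hd : ‖δ‖ ≤ (8 * c ^ 2)⁻¹ := le_of_lt hdist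
    calc ‖δ‖ * ‖W‖ ≤ (8 * c ^ 2)⁻¹ * c :=
          mul_le_mul hd hWc (norm_nonneg _) (by positivity)
    _ ≤ 1/2 := aux_arith1 hc1
  obtain ⟨u, hu, hub⟩ := inv_oneSub_bound (one_norm_le (X := X × Y)) hδW
  have step6 : z = ((j ∘L q) * W) * (↑u⁻¹ : (X × Y) →L[ℂ] (X × Y))
      + ((j ∘L (F₁ ∘L q)) * W - z * G₂) * (↑u⁻¹ : (X × Y) →L[ℂ] (X × Y)) := by
    have huz : z * (↑u : (X × Y) →L[ℂ] (X × Y))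
        = (j ∘L q) * W + ((j ∘L (F₁ ∘L q)) * W - z * G₂) := by
      rw [hu]; exact step4
    calc z = (z * ↑u) * ↑u⁻¹ := by rw [mul_assoc, Units.mul_inv, mul_one]
    _ = _ := by rw [huz, add_mul]
  set Sstar : Y →L[ℂ] Y := q ∘L ((W * (↑u⁻¹ : (X × Y) →L[ℂ] (X × Y))) ∘L j) with hSsdef
  set Ffin : Y →L[ℂ] Y :=
    q ∘L ((((j ∘L (F₁ ∘L q)) * W - z * G₂) * (↑u⁻¹ : (X × Y) →L[ℂ] (X × Y))) ∘L j)
    with hFfdef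
  have hFfin : FinRk Ffin := by
    have hcore : FinRk ((j ∘L (F₁ ∘L q)) * W - z * G₂) :=
      (((h1.compR q).compL j).compR W).sub (g2.compL z)
    exact ((hcore.compR _).compR j).compL q
  have hSsum : S = Sstar + Ffin := by
    refine ContinuousLinearMap.ext fun y => ?_
    have h6 := congrArg (fun f : (X × Y) →L[ℂ] (X × Y) => f (j y)) step6
    simp only [ContinuousLinearMap.add_apply] at h6
    have hS : S y = q (z (j y)) := by simp [hzdef, hjdef, hqdef]
    have hqj : ∀ v : X × Y, q (j (q v)) = q v := by intro v; simp [hjdef, hqdef]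
    have hA1 : q ((((j ∘L q) * W) * (↑u⁻¹ : (X × Y) →L[ℂ] (X × Y))) (j y)) = Sstar y := by
      simp only [hSsdef, ContinuousLinearMap.mul_apply, ContinuousLinearMap.comp_apply]
      exact hqj _
    rw [ContinuousLinearMap.add_apply, hS, h6, map_add, hA1]
    rfl
  have hSsnorm : ‖Sstar‖ ≤ 2 * c := by
    have hb1 : ‖(W * (↑u⁻¹ : (X × Y) →L[ℂ] (X × Y)))‖ ≤ c * 2 := by
      calc ‖(W * (↑u⁻¹ : (X × Y) →L[ℂ] (X × Y)))‖
          ≤ ‖W‖ * ‖(↑u⁻¹ : (X × Y) →L[ℂ] (X × Y))‖ := norm_mul_le _ _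
      _ ≤ c * 2 := mul_le_mul hWc hub (norm_nonneg _) (by positivity)
    have hb2 : ‖(W * (↑u⁻¹ : (X × Y) →L[ℂ] (X × Y))) ∘L j‖ ≤ (c * 2) * 1 :=
      le_trans (ContinuousLinearMap.opNorm_comp_le _ _)
        (mul_le_mul hb1 norm_inr_le (norm_nonneg _) (by positivity))
    rw [hSsdef]
    calc ‖q ∘L ((W * (↑u⁻¹ : (X × Y) →L[ℂ] (X × Y))) ∘L j)‖
        ≤ ‖q‖ * ‖((W * (↑u⁻¹ : (X × Y) →L[ℂ] (X × Y))) ∘L j)‖ :=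
          ContinuousLinearMap.opNorm_comp_le _ _
    _ ≤ 1 * ((c * 2) * 1) :=
          mul_le_mul norm_snd_le' hb2 (norm_nonneg _) zero_le_one
    _ = 2 * c := by ring
  have hSd : Sstar = S - Ffin := by rw [hSsum]; abel
  have e1' : Sstar * T = 1 + (F₁ - Ffin * T) := by
    rw [hSd, sub_mul, e1]; abel
  have e2' : T * Sstar = 1 + (F₂ - T * Ffin) := by
    rw [hSd, mul_sub, e2]; abel
  have hδS : ‖δ • Sstar‖ ≤ 1/2 := by
    rw [norm_smul δ Sstar]
    calc ‖δ‖ * ‖Sstar‖ ≤ (8 * c ^ 2)⁻¹ * (2 * c) :=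
          mul_le_mul (le_of_lt hdist) hSsnorm (norm_nonneg _) (by positivity)
    _ ≤ 1/2 := aux_arith2 hc1
  have hres := afred_shift (h1.sub (hFfin.compR T)) (h2.sub (hFfin.compL T)) e1' e2' hδS
  rwa [hshift] at hres

end Closed

lemma aux_arith3 {s : ℝ} (hs : 0 ≤ s) : (2 * (s + 1))⁻¹ * s ≤ 1/2 := by
  have hpos : (0:ℝ) < 2 * (s + 1) := by linarith
  rw [inv_mul_le_iff₀ hpos]
  linarith

section Topo
variable {E : Type*} [NormedAddCommGroup E] [NormedSpace ℂ E] [CompleteSpace E]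

lemma afred_open {A : E →L[ℂ] E} {lam0 : ℂ} (h : AFred (A - lam0 • 1)) :
    ∃ ε > 0, ∀ lam : ℂ, ‖lam - lam0‖ < ε → AFred (A - lam • 1) := by
  obtain ⟨S, F₁, F₂, h1, h2, e1, e2⟩ := h
  refine ⟨(2 * (‖S‖ + 1))⁻¹, by positivity, fun lam hd => ?_⟩
  have hshift : (A - lam0 • 1) + (lam0 - lam) • 1 = A - lam • 1 := by
    rw [sub_smul]; abel
  have hns : ‖(lam0 - lam) • S‖ ≤ 1/2 := by
    rw [norm_smul (lam0 - lam) S, norm_sub_rev]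
    calc ‖lam - lam0‖ * ‖S‖ ≤ (2 * (‖S‖ + 1))⁻¹ * ‖S‖ :=
          mul_le_mul (le_of_lt hd) le_rfl (norm_nonneg _) (by positivity)
    _ ≤ 1/2 := aux_arith3 (norm_nonneg _)
  have := afred_shift h1 h2 e1 e2 hns
  rwa [hshift] at this

lemma good_all (A : E →L[ℂ] E)
    (hclosed : ∀ lam0 : ℂ, lam0 ≠ 0 → ∃ ε > 0, ∀ lam : ℂ, ‖lam - lam0‖ < ε →
      AFred (A - lam • 1) → AFred (A - lam0 • 1)) :
    ∀ lam : ℂ, lam ≠ 0 → AFred (A - lam • 1) := by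
  set U : Set ℂ := {lam | AFred (A - lam • 1)} with hU
  set V : Set ℂ := {lam | lam ≠ 0 ∧ ¬ AFred (A - lam • 1)} with hV
  have hUopen : IsOpen U := by
    rw [Metric.isOpen_iff]
    intro lam0 h0
    obtain ⟨ε, hε, hball⟩ := afred_open h0
    exact ⟨ε, hε, fun lam hlam =>
      hball lam (by rwa [Metric.mem_ball, dist_eq_norm] at hlam)⟩
  have hVopen : IsOpen V := by
    rw [Metric.isOpen_iff]
    rintro lam0 ⟨h0, hbad⟩
    obtain ⟨ε, hε, hcl⟩ := hclosed lam0 h0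
    have hn0 : 0 < ‖lam0‖ := norm_pos_iff.2 h0
    refine ⟨min ε ‖lam0‖, lt_min hε hn0, fun lam hlam => ?_⟩
    rw [Metric.mem_ball, dist_eq_norm] at hlam
    constructor
    · intro h0'
      rw [h0'] at hlam
      have : ‖(0:ℂ) - lam0‖ = ‖lam0‖ := by simp
      rw [this] at hlam
      exact absurd (lt_of_lt_of_le hlam (min_le_right _ _)) (lt_irrefl _)
    · intro hgood
      exact hbad (hcl lam (lt_of_lt_of_le hlam (min_le_left _ _)) hgood)
  have hbig : (((‖A‖ + 1 : ℝ) : ℂ)) ∈ U := by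
    refine afred_of_big A ?_
    have : ‖((‖A‖ + 1 : ℝ) : ℂ)‖ = |‖A‖ + 1| := by rw [Complex.norm_real, Real.norm_eq_abs]
    rw [this, abs_of_pos (by positivity)]
    linarith
  have hbigne : ((‖A‖ + 1 : ℝ) : ℂ) ≠ 0 := by
    rw [Complex.ofReal_ne_zero]
    positivity
  have hconn : IsPreconnected ({(0:ℂ)}ᶜ : Set ℂ) := by
    have := isConnected_compl_singleton_of_one_lt_rank
      (E := ℂ) (by rw [Complex.rank_real_complex]; norm_num) (0 : ℂ)
    exact this.isPreconnected
  intro lam hlam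
  by_contra hbad
  have hUne : (({(0:ℂ)}ᶜ : Set ℂ) ∩ U).Nonempty :=
    ⟨((‖A‖ + 1 : ℝ) : ℂ), Set.mem_compl_singleton_iff.2 hbigne, hbig⟩
  have hVne : (({(0:ℂ)}ᶜ : Set ℂ) ∩ V).Nonempty :=
    ⟨lam, Set.mem_compl_singleton_iff.2 hlam, ⟨hlam, hbad⟩⟩
  have hcover : ({(0:ℂ)}ᶜ : Set ℂ) ⊆ U ∪ V := by
    intro x hx
    by_cases hA : AFred (A - x • 1)
    · exact Or.inl hA
    · exact Or.inr ⟨Set.mem_compl_singleton_iff.1 hx, hA⟩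
  obtain ⟨x, -, hxU, hxV⟩ := hconn U V hUopen hVopen hcover hUne hVne
  exact hxV.2 hxU

end Topo

section Core
variable {X Y : Type*} [NormedAddCommGroup X] [NormedSpace ℂ X] [CompleteSpace X]
  [NormedAddCommGroup Y] [NormedSpace ℂ Y] [CompleteSpace Y]

lemma ut_riesz (A : X →L[ℂ] X) (B : Y →L[ℂ] Y) (C : Y →L[ℂ] X)
    (hN : ∀ lam : ℂ, lam ≠ 0 →
      IsFredholm (upperTriangular A B C - lam • (1 : (X × Y) →L[ℂ] (X × Y)))) :
    (∀ lam : ℂ, lam ≠ 0 → IsFredholm (A - lam • 1)) ∧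
      (∀ lam : ℂ, lam ≠ 0 → IsFredholm (B - lam • 1)) := by
  have hNa : ∀ lam : ℂ, lam ≠ 0 → AFred (upperTriangular A B C - lam • 1) :=
    fun lam h => (hN lam h).afred
  constructor
  · intro lam hlam
    refine (good_all A (fun lam0 h0 => ?_) lam hlam).isFredholm
    exact ut_closedA A B C lam0 (hNa lam0 h0)
  · intro lam hlam
    refine (good_all B (fun lam0 h0 => ?_) lam hlam).isFredholm
    exact ut_closedB A B C lam0 (hNa lam0 h0)

end Core


end GDRAux

/-- If M_C is generalized Drazin-Riesz invertible with an upper triangular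
generalized Drazin-Riesz inverse S = [[U, W], [0, V]], then A and B are generalized
Drazin-Riesz invertible. -/
theorem stmt_7 {X Y : Type*} [NormedAddCommGroup X] [NormedSpace ℂ X] [CompleteSpace X]
    [NormedAddCommGroup Y] [NormedSpace ℂ Y] [CompleteSpace Y]
    (A : X →L[ℂ] X) (B : Y →L[ℂ] Y) (C : Y →L[ℂ] X)
    (U : X →L[ℂ] X) (V : Y →L[ℂ] Y) (W : Y →L[ℂ] X)
    (hcomm : upperTriangular A B C * upperTriangular U V W =
      upperTriangular U V W * upperTriangular A B C)
    (hSTS : upperTriangular U V W * upperTriangular A B C * upperTriangular U V W =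
      upperTriangular U V W)
    (hRiesz : IsRiesz (upperTriangular A B C -
      upperTriangular A B C * upperTriangular U V W * upperTriangular A B C)) :
    IsGDRInvertible A ∧ IsGDRInvertible B := by
  have h1 := ut_mul A U B V C W
  have h2 := ut_mul U A V B W C
  rw [h1, h2] at hcomm
  obtain ⟨hAU, hBV, -⟩ := ut_eq_components hcomm
  have h3 : upperTriangular U V W * upperTriangular A B C * upperTriangular U V W
      = upperTriangular ((U * A) * U) ((V * B) * V)
          ((U * A) ∘L W + (U ∘L C + W ∘L B) ∘L V) := by
    rw [h2, ut_mul]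
  rw [h3] at hSTS
  obtain ⟨hUAU, hVBV, -⟩ := ut_eq_components hSTS
  have h4 : upperTriangular A B C -
      upperTriangular A B C * upperTriangular U V W * upperTriangular A B C
      = upperTriangular (A - (A * U) * A) (B - (B * V) * B)
          (C - ((A * U) ∘L C + (A ∘L W + C ∘L V) ∘L B)) := by
    rw [h1, ut_mul, ut_sub]
  rw [h4] at hRiesz
  obtain ⟨hRA, hRB⟩ := ut_riesz _ _ _ (fun lam h => hRiesz lam h)
  constructor
  · exact ⟨U, hAU, hUAU, fun lam h => hRA lam h⟩
  · exact ⟨V, hBV, hVBV, fun lam h => hRB lam h⟩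
end

section
/- If T ∈ B(X) is upper semi-Browder or lower semi-Browder, then T is essentially Kato; consequently σ_gKR(T) ⊆ σ_eK(T) ⊆ σ_{b+}(T) ∩ σ_{b-}(T). -/
noncomputable section StmtTenAux

open LinearMap Set

section Alg

variable {X : Type*} [NormedAddCommGroup X] [NormedSpace ℂ X]

lemma pow_add_apply (T : X →L[ℂ] X) (a b : ℕ) (x : X) :
    (T ^ (a + b)) x = (T ^ a) ((T ^ b) x) := by
  rw [pow_add, ContinuousLinearMap.mul_apply]

lemma pow_comm_apply (T : X →L[ℂ] X) (k : ℕ) (x : X) : (T ^ k) (T x) = T ((T ^ k) x) := by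
  rw [← ContinuousLinearMap.mul_apply, ← pow_succ, pow_succ', ContinuousLinearMap.mul_apply]

/-- kernels of powers stabilize -/
lemma ker_pow_stab (T : X →L[ℂ] X) {p : ℕ}
    (h : LinearMap.ker ((T ^ p : X →L[ℂ] X) : X →ₗ[ℂ] X) = LinearMap.ker ((T ^ (p + 1) : X →L[ℂ] X) : X →ₗ[ℂ] X)) :
    ∀ m : ℕ, LinearMap.ker ((T ^ (p + m) : X →L[ℂ] X) : X →ₗ[ℂ] X) = LinearMap.ker ((T ^ p : X →L[ℂ] X) : X →ₗ[ℂ] X) := by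
  intro m
  induction m with
  | zero => rfl
  | succ m ih =>
    apply le_antisymm
    · intro x hx
      have hx1 : (T ^ (p + m + 1)) x = 0 := by
        rw [show p + m + 1 = p + (m + 1) by ring]; exact hx
      have hx' : (T ^ (p + 1)) ((T ^ m) x) = 0 := by
        rw [← pow_add_apply, show p + 1 + m = p + m + 1 by ring, hx1]
      have h2 : (T ^ m) x ∈ LinearMap.ker ((T ^ p : X →L[ℂ] X) : X →ₗ[ℂ] X) := h ▸ hx'
      have hker : x ∈ LinearMap.ker ((T ^ (p + m) : X →L[ℂ] X) : X →ₗ[ℂ] X) := by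
        simp only [LinearMap.mem_ker, ContinuousLinearMap.coe_coe, pow_add_apply]
        exact h2
      exact ih ▸ hker
    · intro x hx
      have hx0 : (T ^ p) x = 0 := hx
      simp only [LinearMap.mem_ker, ContinuousLinearMap.coe_coe, show p + (m+1) = (m+1) + p by ring, pow_add_apply, hx0,
        map_zero]

/-- ranges of powers stabilize -/
lemma range_pow_stab (T : X →L[ℂ] X) {d : ℕ}
    (h : LinearMap.range ((T ^ d : X →L[ℂ] X) : X →ₗ[ℂ] X) = LinearMap.range ((T ^ (d + 1) : X →L[ℂ] X) : X →ₗ[ℂ] X)) :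
    ∀ m : ℕ, LinearMap.range ((T ^ (d + m) : X →L[ℂ] X) : X →ₗ[ℂ] X) = LinearMap.range ((T ^ d : X →L[ℂ] X) : X →ₗ[ℂ] X) := by
  have step : ∀ m : ℕ, LinearMap.range ((T ^ (d + m + 1) : X →L[ℂ] X) : X →ₗ[ℂ] X) = LinearMap.range ((T ^ (d + m) : X →L[ℂ] X) : X →ₗ[ℂ] X) := by
    intro m
    apply le_antisymm
    · rintro y ⟨x, rfl⟩
      refine ⟨T x, ?_⟩
      show (T ^ (d + m)) (T x) = (T ^ (d + m + 1)) x
      rw [show d + m + 1 = (d + m) + 1 from rfl, pow_succ, ContinuousLinearMap.mul_apply]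
    · rintro y ⟨x, rfl⟩
      obtain ⟨z, hz⟩ : (T ^ d) x ∈ LinearMap.range ((T ^ (d + 1) : X →L[ℂ] X) : X →ₗ[ℂ] X) := h ▸ ⟨x, rfl⟩
      refine ⟨z, ?_⟩
      show (T ^ (d + m + 1)) z = (T ^ (d + m)) x
      replace hz : (T ^ (d + 1)) z = (T ^ d) x := hz
      rw [show d + m + 1 = m + (d + 1) by ring, pow_add_apply, hz, ← pow_add_apply,
        show m + d = d + m by ring]
  intro m
  induction m with
  | zero => rfl
  | succ m ih => rw [show d + (m+1) = d + m + 1 from rfl, step m, ih]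

end Alg
end StmtTenAux

noncomputable section StmtTenAux2
open LinearMap Set

section FD
variable {M : Type*} [AddCommGroup M] [Module ℂ M]

lemma findim_of_sub_quot (S : Submodule ℂ M) [FiniteDimensional ℂ S]
    [FiniteDimensional ℂ (M ⧸ S)] : FiniteDimensional ℂ M := by
  have : Module.rank ℂ M < Cardinal.aleph0 := by
    rw [← Submodule.rank_quotient_add_rank S]
    exact Cardinal.add_lt_aleph0 (Module.rank_lt_aleph0 _ _) (Module.rank_lt_aleph0 _ _)
  exact Module.rank_lt_aleph0_iff.mp this

lemma findim_of_ker_range {N : Type*} [AddCommGroup N] [Module ℂ N] (g : M →ₗ[ℂ] N)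
    (h1 : FiniteDimensional ℂ (LinearMap.ker g)) (h2 : FiniteDimensional ℂ (LinearMap.range g)) :
    FiniteDimensional ℂ M := by
  haveI : FiniteDimensional ℂ (M ⧸ LinearMap.ker g) :=
    Module.Finite.equiv g.quotKerEquivRange.symm
  exact findim_of_sub_quot (LinearMap.ker g)

end FD
end StmtTenAux2

noncomputable section StmtTenAux3
open LinearMap Set

universe u

lemma jordan_aux : ∀ (n : ℕ) (V : Type u) [AddCommGroup V] [Module ℂ V]
    [FiniteDimensional ℂ V], Module.finrank ℂ V = n → ∀ (f : V →ₗ[ℂ] V) (d : ℕ), f ^ d = 0 →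
    ∃ (ι : Type) (_ : Fintype ι) (ℓ : ι → ℕ) (e : ι → V),
      (∀ i, 0 < ℓ i) ∧ (∀ i, (f ^ ℓ i) (e i) = 0) ∧
      LinearIndependent ℂ (fun p : (Σ i : ι, Fin (ℓ i)) => (f ^ (p.2 : ℕ)) (e p.1)) ∧
      Submodule.span ℂ (Set.range (fun p : (Σ i : ι, Fin (ℓ i)) => (f ^ (p.2 : ℕ)) (e p.1))) = ⊤ := by
  intro n
  induction n using Nat.strong_induction_on with
  | _ n IH =>
  intro V _ _ _ hrank f d hd
  classical
  by_cases htriv : ∀ v : V, v = 0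
  · haveI : IsEmpty (Σ i : Empty, Fin ((fun _ => 1) i)) := ⟨fun p => p.1.elim⟩
    refine ⟨Empty, inferInstance, fun _ => 1, fun i => i.elim, fun i => i.elim,
      fun i => i.elim, linearIndependent_empty_type, ?_⟩
    refine eq_top_iff.mpr fun x _ => ?_
    rw [htriv x]; exact Submodule.zero_mem _
  · push_neg at htriv
    obtain ⟨v₀, hv₀⟩ := htriv
    have hex : ∃ k, f ^ k = 0 := ⟨d, hd⟩
    set ℓ₀ := Nat.find hex with hℓ₀def
    have hf0 : f ^ ℓ₀ = 0 := Nat.find_spec hex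
    have hposℓ₀ : 0 < ℓ₀ := by
      rcases Nat.eq_zero_or_pos ℓ₀ with h0 | h; swap; · exact h
      exfalso
      apply hv₀
      have : (f ^ ℓ₀) v₀ = v₀ := by rw [h0, pow_zero]; rfl
      rw [hf0] at this; simpa using this.symm
    have hge : ∀ k, ℓ₀ ≤ k → ∀ v : V, (f ^ k) v = 0 := by
      intro k hk v
      have : f ^ k = f ^ (k - ℓ₀) * f ^ ℓ₀ := by rw [← pow_add]; congr 1; omega
      rw [this, Module.End.mul_apply, hf0]; simp
    have hne : f ^ (ℓ₀ - 1) ≠ 0 := Nat.find_min hex (by omega)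
    obtain ⟨e₀, he₀⟩ : ∃ v : V, (f ^ (ℓ₀ - 1)) v ≠ 0 := by
      by_contra hcon; push_neg at hcon
      exact hne (LinearMap.ext hcon)
    obtain ⟨φ, hφ⟩ : ∃ φ : Module.Dual ℂ V, φ ((f ^ (ℓ₀ - 1)) e₀) ≠ 0 := by
      by_contra hcon; push_neg at hcon
      exact he₀ ((Module.forall_dual_apply_eq_zero_iff ℂ _).mp hcon)
    set Zfam : Fin ℓ₀ → V := fun j => (f ^ (j : ℕ)) e₀ with hZfam
    have hkey : ∀ c : Fin ℓ₀ → ℂ,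
        (∀ t : ℕ, t < ℓ₀ → φ ((f ^ t) (∑ j, c j • Zfam j)) = 0) → ∀ j, c j = 0 := by
      intro c hc
      by_contra hcon; push_neg at hcon
      obtain ⟨j₁, hj₁⟩ := hcon
      set s : Finset (Fin ℓ₀) := Finset.univ.filter (fun j => c j ≠ 0) with hs
      have hsne : s.Nonempty := ⟨j₁, by simp [hs, hj₁]⟩
      set j₀ := s.min' hsne with hj₀def
      have hj₀s : j₀ ∈ s := s.min'_mem hsne
      have hj₀ : c j₀ ≠ 0 := by simpa [hs] using hj₀s
      have hmin : ∀ j : Fin ℓ₀, c j ≠ 0 → j₀ ≤ j := fun j hj =>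
        s.min'_le j (by simp [hs, hj])
      have ht := hc (ℓ₀ - 1 - (j₀ : ℕ)) (by omega)
      have hexpand : φ ((f ^ (ℓ₀ - 1 - (j₀ : ℕ))) (∑ j, c j • Zfam j)) =
          ∑ j : Fin ℓ₀, c j • φ ((f ^ ((ℓ₀ - 1 - (j₀ : ℕ)) + (j : ℕ))) e₀) := by
        rw [map_sum, map_sum]
        congr 1
        funext j
        rw [map_smul, map_smul]
        congr 2
        rw [pow_add, Module.End.mul_apply]
      rw [hexpand] at ht
      have hsingle : ∀ j : Fin ℓ₀, j ≠ j₀ →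
          c j • φ ((f ^ ((ℓ₀ - 1 - (j₀ : ℕ)) + (j : ℕ))) e₀) = 0 := by
        intro j hj
        rcases lt_or_gt_of_ne (fun h : (j : ℕ) = (j₀ : ℕ) => hj (Fin.ext h)) with hlt | hgt
        · have : c j = 0 := by
            by_contra hc0
            exact absurd (hmin j hc0) (by simpa using hlt)
          rw [this, zero_smul]
        · have : ℓ₀ ≤ (ℓ₀ - 1 - (j₀ : ℕ)) + (j : ℕ) := by
            have := j₀.isLt; have := j.isLt; omega
          rw [hge _ this, map_zero, smul_zero]
      rw [Finset.sum_eq_single j₀ (fun j _ hj => hsingle j hj) (by simp)] at ht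
      have harith : (ℓ₀ - 1 - (j₀ : ℕ)) + (j₀ : ℕ) = ℓ₀ - 1 := by
        have := j₀.isLt; omega
      rw [harith] at ht
      exact hj₀ (by
        rcases smul_eq_zero.mp ht with h | h
        · exact h
        · exact absurd h hφ)
    set Z := Submodule.span ℂ (Set.range Zfam) with hZ
    set W : Submodule ℂ V := ⨅ (t : Fin ℓ₀), LinearMap.ker (φ ∘ₗ (f ^ (t : ℕ))) with hW
    have hWmem : ∀ x : V, x ∈ W ↔ ∀ t : ℕ, t < ℓ₀ → φ ((f ^ t) x) = 0 := by
      intro x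
      rw [Submodule.mem_iInf]
      constructor
      · intro h t ht; exact h ⟨t, ht⟩
      · intro h t; exact h t t.isLt
    have hZW : ∀ x, x ∈ Z → x ∈ W → x = 0 := by
      intro x hxZ hxW
      obtain ⟨c, hc⟩ := (Submodule.mem_span_range_iff_exists_fun ℂ).mp hxZ
      have hall : ∀ j, c j = 0 := by
        apply hkey
        intro t ht
        rw [hc]
        exact (hWmem x).mp hxW t ht
      rw [← hc]
      simp [hall]
    have hLIZ : LinearIndependent ℂ Zfam := by
      rw [Fintype.linearIndependent_iff]
      intro c hc
      apply hkey
      intro t ht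
      rw [hc]; simp
    have hWf : ∀ x ∈ W, f x ∈ W := by
      intro x hx
      rw [hWmem]
      intro t ht
      have : (f ^ t) (f x) = (f ^ (t + 1)) x := by
        rw [pow_succ, Module.End.mul_apply]
      rw [this]
      rcases Nat.lt_or_ge (t + 1) ℓ₀ with h | h
      · exact (hWmem x).mp hx (t + 1) h
      · rw [hge _ h, map_zero]
    have hdisj : Disjoint Z W := Submodule.disjoint_def.mpr (fun x hx hx' => hZW x hx hx')
    -- rank computations
    have hZrank : Module.finrank ℂ Z = ℓ₀ := by
      rw [hZ, finrank_span_eq_card hLIZ, Fintype.card_fin]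
    set Φ : V →ₗ[ℂ] (Fin ℓ₀ → ℂ) := LinearMap.pi (fun t : Fin ℓ₀ => φ ∘ₗ (f ^ (t : ℕ))) with hΦ
    have hWker : W = LinearMap.ker Φ := by
      ext x
      rw [LinearMap.mem_ker, Submodule.mem_iInf]
      constructor
      · intro h; funext t; exact h t
      · intro h t
        have := congrFun h t
        exact this
    have hrankΦ : Module.finrank ℂ (LinearMap.range Φ) + Module.finrank ℂ (LinearMap.ker Φ) =
        n := by rw [← hrank]; exact finrank_range_add_finrank_ker Φ
    have hrangele : Module.finrank ℂ (LinearMap.range Φ) ≤ ℓ₀ := by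
      have := Submodule.finrank_le (LinearMap.range Φ)
      simpa [Module.finrank_fintype_fun_eq_card] using this
    have hWrank : n ≤ ℓ₀ + Module.finrank ℂ W := by
      rw [hWker]; omega
    have hsupinf := Submodule.finrank_sup_add_finrank_inf_eq Z W
    rw [hdisj.eq_bot, finrank_bot, add_zero, hZrank] at hsupinf
    have hsuple : Module.finrank ℂ ((Z ⊔ W : Submodule ℂ V)) ≤ n := by
      rw [← hrank]; exact Submodule.finrank_le _
    have htop : Z ⊔ W = ⊤ := by
      apply Submodule.eq_top_of_finrank_eq
      rw [hrank]; omega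
    have hWlt : Module.finrank ℂ W < n := by omega
    -- restrict f to W
    set fW : ↥W →ₗ[ℂ] ↥W := f.restrict hWf with hfW
    have hfWpow : ∀ (k : ℕ) (w : ↥W), ((fW ^ k) w : V) = (f ^ k) (w : V) := by
      intro k w
      rw [hfW, Module.End.pow_restrict k hWf]
      rfl
    have hfWnil : fW ^ ℓ₀ = 0 := by
      apply LinearMap.ext
      intro w
      apply Subtype.ext
      rw [hfWpow, hf0]
      rfl
    obtain ⟨ι', hι'fin, ℓ', e', hpos', hkill', hLI', hspan'⟩ :=
      IH (Module.finrank ℂ W) hWlt ↥W rfl fW ℓ₀ hfWnil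
    haveI := hι'fin
    -- combine
    refine ⟨Option ι', inferInstance,
      (fun o => match o with | none => ℓ₀ | some i => ℓ' i),
      (fun o => match o with | none => e₀ | some i => (e' i : V)), ?_, ?_, ?_⟩
    · rintro (_ | i)
      · exact hposℓ₀
      · exact hpos' i
    · rintro (_ | i)
      · show (f ^ ℓ₀) e₀ = 0
        rw [hf0]; rfl
      · show (f ^ ℓ' i) (e' i : V) = 0
        rw [← hfWpow, hkill' i]; rfl
    · set ℓfun : Option ι' → ℕ := (fun o => match o with | none => ℓ₀ | some i => ℓ' i) with hℓfun
      set efun : Option ι' → V := (fun o => match o with | none => e₀ | some i => (e' i : V))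
        with hefun
      set G : (Σ o : Option ι', Fin (ℓfun o)) → V := fun p => (f ^ (p.2 : ℕ)) (efun p.1) with hG
      set fam' : (Σ i : ι', Fin (ℓ' i)) → ↥W := fun q => (fW ^ (q.2 : ℕ)) (e' q.1) with hfam'
      set famSum : (Fin ℓ₀ ⊕ (Σ i : ι', Fin (ℓ' i))) → V :=
        Sum.elim Zfam (fun q => (fam' q : V)) with hfamSum
      have hspanval : Submodule.span ℂ (Set.range (fun q => (fam' q : V))) = W := by
        have h1 : Set.range (fun q => (fam' q : V)) = W.subtype '' (Set.range fam') := by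
          rw [← Set.range_comp]; rfl
        rw [h1, ← Submodule.map_span, hspan', Submodule.map_top, Submodule.range_subtype]
      have hLIsum : LinearIndependent ℂ famSum := by
        apply LinearIndependent.sum_type hLIZ (hLI'.map' W.subtype (Submodule.ker_subtype W))
        have hcomp : (⇑W.subtype ∘ fam') = fun q => ((fam' q : V)) := rfl
        rw [hcomp, hspanval, ← hZ]
        exact hdisj
      set E : (Fin ℓ₀ ⊕ (Σ i : ι', Fin (ℓ' i))) ≃ (Σ o : Option ι', Fin (ℓfun o)) :=
        { toFun := Sum.elim (fun j => ⟨none, j⟩) (fun q => ⟨some q.1, q.2⟩)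
          invFun := fun p => match p with
            | ⟨none, j⟩ => Sum.inl j
            | ⟨some i, j⟩ => Sum.inr ⟨i, j⟩
          left_inv := by rintro (j | ⟨i, j⟩) <;> rfl
          right_inv := by rintro ⟨(_ | i), j⟩ <;> rfl } with hE
      have hGE : ∀ s, G (E s) = famSum s := by
        rintro (j | ⟨i, j⟩)
        · rfl
        · show (f ^ (j : ℕ)) (e' i : V) = ((fW ^ (j : ℕ)) (e' i) : V)
          rw [hfWpow]
      have hGeq : G = famSum ∘ E.symm := by
        funext p
        have := hGE (E.symm p)
        rw [E.apply_symm_apply] at this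
        rw [this]; rfl
      constructor
      · rw [hGeq]
        exact hLIsum.comp E.symm E.symm.injective
      · rw [hGeq]
        have : Set.range (famSum ∘ E.symm) = Set.range famSum := by
          rw [Set.range_comp, E.symm.surjective.range_eq, Set.image_univ]
        rw [this, hfamSum, Set.Sum.elim_range, Submodule.span_union, hspanval, ← hZ, htop]

noncomputable section StmtTenAux4
open LinearMap Set

section Analysis
variable {X : Type*} [NormedAddCommGroup X] [NormedSpace ℂ X]
variable {Y : Type*} [NormedAddCommGroup Y] [NormedSpace ℂ Y]

/-- Continuous linear lift of a CLM to a quotient by a submodule of its kernel. -/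
def clmLiftQ (S : Submodule ℂ X) (g : X →L[ℂ] Y) (h : S ≤ LinearMap.ker (g : X →ₗ[ℂ] Y)) :
    (X ⧸ S) →L[ℂ] Y :=
  LinearMap.mkContinuous (S.liftQ (g : X →ₗ[ℂ] Y) h) (‖g‖ + 1) (by
    intro z
    refine le_of_forall_pos_le_add ?_
    intro ε hε
    have hδ : 0 < ε / (‖g‖ + 1) := by positivity
    obtain ⟨m, hm, hmlt⟩ := Submodule.Quotient.norm_mk_lt z hδ
    have h1 : (S.liftQ (g : X →ₗ[ℂ] Y) h) z = g m := by rw [← hm, Submodule.liftQ_apply]; rfl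
    rw [h1]
    calc ‖g m‖ ≤ ‖g‖ * ‖m‖ := g.le_opNorm m
      _ ≤ (‖g‖ + 1) * ‖m‖ := by
          have := norm_nonneg m; nlinarith
      _ ≤ (‖g‖ + 1) * (‖z‖ + ε / (‖g‖ + 1)) := by
          have h2 : (0:ℝ) < ‖g‖ + 1 := by positivity
          nlinarith [hmlt]
      _ = (‖g‖ + 1) * ‖z‖ + ε := by
          field_simp)

lemma clmLiftQ_apply (S : Submodule ℂ X) (g : X →L[ℂ] Y) (h : S ≤ LinearMap.ker (g : X →ₗ[ℂ] Y)) (x : X) :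
    clmLiftQ S g h (Submodule.Quotient.mk x) = g x := by
  simp only [clmLiftQ, LinearMap.mkContinuous_apply, Submodule.liftQ_apply]
  rfl

lemma range_clmLiftQ (S : Submodule ℂ X) (g : X →L[ℂ] Y) (h : S ≤ LinearMap.ker (g : X →ₗ[ℂ] Y)) :
    LinearMap.range (clmLiftQ S g h : (X ⧸ S) →ₗ[ℂ] Y) = LinearMap.range (g : X →ₗ[ℂ] Y) := by
  apply le_antisymm
  · rintro y ⟨z, rfl⟩
    obtain ⟨x, rfl⟩ := Submodule.Quotient.mk_surjective S z
    exact ⟨x, (clmLiftQ_apply S g h x).symm⟩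
  · rintro y ⟨x, rfl⟩
    exact ⟨Submodule.Quotient.mk x, clmLiftQ_apply S g h x⟩

lemma ker_clmLiftQ_eq_bot (S : Submodule ℂ X) (g : X →L[ℂ] Y) (hSK : S = LinearMap.ker (g : X →ₗ[ℂ] Y)) :
    LinearMap.ker (clmLiftQ S g (le_of_eq hSK) : (X ⧸ S) →ₗ[ℂ] Y) = ⊥ := by
  rw [eq_bot_iff]
  rintro z hz
  obtain ⟨x, rfl⟩ := Submodule.Quotient.mk_surjective S z
  have : g x = 0 := by rw [← clmLiftQ_apply S g (le_of_eq hSK) x]; exact hz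
  have hx : x ∈ S := by rw [hSK]; exact this
  simpa [Submodule.Quotient.mk_eq_zero] using (Submodule.Quotient.mk_eq_zero S).mpr hx

/-- A finite-codimensional range of a continuous linear map on a Banach space is closed. -/
lemma isClosed_range_of_fincodim [CompleteSpace X] (S : X →L[ℂ] X)
    (hfc : FiniteDimensional ℂ (X ⧸ LinearMap.range (S : X →ₗ[ℂ] X))) :
    IsClosed ((LinearMap.range (S : X →ₗ[ℂ] X) : Submodule ℂ X) : Set X) := by
  haveI : IsClosed ((LinearMap.ker (S : X →ₗ[ℂ] X) : Submodule ℂ X) : Set X) := ContinuousLinearMap.isClosed_ker S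
  set hquo := clmLiftQ (LinearMap.ker (S : X →ₗ[ℂ] X)) S le_rfl with hhquo
  have hinj : LinearMap.ker (hquo : (X ⧸ LinearMap.ker (S : X →ₗ[ℂ] X)) →ₗ[ℂ] X) = ⊥ := ker_clmLiftQ_eq_bot _ S rfl
  have hrg : LinearMap.range (hquo : (X ⧸ LinearMap.ker (S : X →ₗ[ℂ] X)) →ₗ[ℂ] X) = LinearMap.range (S : X →ₗ[ℂ] X) := range_clmLiftQ _ S le_rfl
  obtain ⟨G, hG⟩ := Submodule.exists_isCompl (LinearMap.range (S : X →ₗ[ℂ] X))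
  haveI : FiniteDimensional ℂ G := by
    haveI := hfc
    exact Module.Finite.equiv (Submodule.quotientEquivOfIsCompl _ G hG)
  have hGc : IsClosed (G : Set X) := Submodule.closed_of_finiteDimensional G
  have hcompl : IsCompl (LinearMap.range (hquo : (X ⧸ LinearMap.ker (S : X →ₗ[ℂ] X)) →ₗ[ℂ] X)) G := by rw [hrg]; exact hG
  have := ContinuousLinearMap.closed_complemented_range_of_isCompl_of_ker_eq_bot hquo G hcompl hGc
    hinj
  rw [hrg] at this
  exact this

/-- sum of a closed submodule and a finite dimensional one is closed -/
lemma isClosed_sup_findim (C F : Submodule ℂ X) (hC : IsClosed (C : Set X))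
    (hF : FiniteDimensional ℂ F) : IsClosed ((C ⊔ F : Submodule ℂ X) : Set X) := by
  haveI := hC
  haveI := hF
  have hqc : Continuous (⇑C.mkQ) :=
    AddMonoidHomClass.continuous_of_bound C.mkQ 1 (fun x => by
      simpa using Submodule.Quotient.norm_mk_le C x)
  haveI : FiniteDimensional ℂ (Submodule.map C.mkQ F) := Module.Finite.map F C.mkQ
  have hK'c : IsClosed ((Submodule.map C.mkQ F : Submodule ℂ (X ⧸ C)) : Set (X ⧸ C)) :=
    Submodule.closed_of_finiteDimensional _
  have hpre : ((C ⊔ F : Submodule ℂ X) : Set X) =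
      ⇑C.mkQ ⁻¹' ((Submodule.map C.mkQ F : Submodule ℂ (X ⧸ C)) : Set (X ⧸ C)) := by
    ext x
    simp only [SetLike.mem_coe, Set.mem_preimage]
    constructor
    · intro hx
      obtain ⟨c, hc, f, hf, rfl⟩ := Submodule.mem_sup.mp hx
      have : C.mkQ (c + f) = C.mkQ f := by
        simp only [map_add]
        rw [show C.mkQ c = 0 from (Submodule.Quotient.mk_eq_zero C).mpr hc, zero_add]
      rw [this]
      exact Submodule.mem_map_of_mem hf
    · rintro ⟨f, hf, hfx⟩
      have : x - f ∈ C := by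
        rw [← Submodule.Quotient.mk_eq_zero C]
        have : C.mkQ (x - f) = 0 := by rw [map_sub, hfx, sub_self]
        exact this
      exact Submodule.mem_sup.mpr ⟨x - f, this, f, hf, sub_add_cancel x f⟩
  rw [hpre]
  exact hK'c.preimage hqc

/-- image of a closed set under a bounded-below CLM with complete domain is closed -/
lemma isClosed_image_of_bddBelow [CompleteSpace X] (g : X →L[ℂ] Y) (c : ℝ) (hc : 0 < c)
    (hlow : ∀ z, ‖z‖ ≤ c * ‖g z‖) (s : Set X) (hs : IsClosed s) : IsClosed (⇑g '' s) := by
  apply IsSeqClosed.isClosed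
  intro y p hy hp
  choose x hxs hxy using hy
  have hyc : CauchySeq (fun n => g (x n)) := by
    have : (fun n => g (x n)) = y := by funext n; exact hxy n
    rw [this]
    exact hp.cauchySeq
  have hxc : CauchySeq x := by
    rw [Metric.cauchySeq_iff] at hyc ⊢
    intro ε hε
    obtain ⟨N, hN⟩ := hyc (ε / c) (by positivity)
    refine ⟨N, fun m hm n hn => ?_⟩
    have h1 := hN m hm n hn
    rw [dist_eq_norm] at h1 ⊢
    calc ‖x m - x n‖ ≤ c * ‖g (x m - x n)‖ := hlow _
      _ = c * ‖g (x m) - g (x n)‖ := by rw [map_sub]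
      _ < c * (ε / c) := by
          apply mul_lt_mul_of_pos_left _ hc
          exact h1
      _ = ε := by field_simp
  obtain ⟨x₀, hx₀⟩ := cauchySeq_tendsto_of_complete hxc
  have hx₀s : x₀ ∈ s := hs.mem_of_tendsto hx₀ (Filter.Eventually.of_forall hxs)
  refine ⟨x₀, hx₀s, ?_⟩
  have h1 : Filter.Tendsto (fun n => g (x n)) Filter.atTop (nhds (g x₀)) :=
    (g.continuous.tendsto x₀).comp hx₀
  have h2 : Filter.Tendsto (fun n => g (x n)) Filter.atTop (nhds p) := by
    have : (fun n => g (x n)) = y := by funext n; exact hxy n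
    rw [this]; exact hp
  exact tendsto_nhds_unique h1 h2

/-- saturated image under mkQ of closed is closed -/
lemma isClosed_mkQ_image (K C' : Submodule ℂ X) (hKle : K ≤ C') (hC' : IsClosed (C' : Set X)) :
    IsClosed (⇑K.mkQ '' (C' : Set X)) := by
  rw [← isOpen_compl_iff]
  have hcompl : (⇑K.mkQ '' (C' : Set X))ᶜ = ⇑K.mkQ '' ((C' : Set X)ᶜ) := by
    ext z
    constructor
    · intro hz
      obtain ⟨x, rfl⟩ := K.mkQ_surjective z
      refine ⟨x, fun hx => hz ⟨x, hx, rfl⟩, rfl⟩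
    · rintro ⟨x, hx, rfl⟩ ⟨y, hy, heq⟩
      apply hx
      have : x - y ∈ K := by
        rw [← Submodule.Quotient.mk_eq_zero K]
        have : K.mkQ (x - y) = 0 := by rw [map_sub, heq, sub_self]
        exact this
      have hxy : x = (x - y) + y := (sub_add_cancel x y).symm
      rw [hxy]
      exact C'.add_mem (hKle this) hy
  rw [hcompl]
  exact Submodule.isOpenMap_mkQ K _ hC'.isOpen_compl

/-- key: image of a closed subspace under an upper semi-Fredholm operator is closed -/
lemma closed_image [CompleteSpace X] (T : X →L[ℂ] X)
    (hker : FiniteDimensional ℂ (LinearMap.ker (T : X →ₗ[ℂ] X)))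
    (hrg : IsClosed ((LinearMap.range (T : X →ₗ[ℂ] X) : Submodule ℂ X) : Set X))
    (C : Submodule ℂ X) (hC : IsClosed (C : Set X)) :
    IsClosed ((Submodule.map (T : X →ₗ[ℂ] X) C : Submodule ℂ X) : Set X) := by
  haveI := hker
  set K := LinearMap.ker (T : X →ₗ[ℂ] X) with hK
  haveI : IsClosed ((K : Submodule ℂ X) : Set X) := ContinuousLinearMap.isClosed_ker T
  set C' := C ⊔ K with hC'def
  have hC' : IsClosed ((C' : Submodule ℂ X) : Set X) := isClosed_sup_findim C K hC hker
  have hmapeq : Submodule.map (T : X →ₗ[ℂ] X) C' = Submodule.map (T : X →ₗ[ℂ] X) C := by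
    rw [hC'def, Submodule.map_sup]
    have : Submodule.map (T : X →ₗ[ℂ] X) K = ⊥ := by
      rw [eq_bot_iff]
      rintro y ⟨x, hx, rfl⟩
      exact hx
    rw [this, sup_bot_eq]
  rw [← hmapeq]
  set hquo := clmLiftQ K T le_rfl with hhquo
  have hinj : LinearMap.ker (hquo : (X ⧸ K) →ₗ[ℂ] X) = ⊥ := ker_clmLiftQ_eq_bot _ T rfl
  -- bounded below
  haveI : CompleteSpace (LinearMap.range (T : X →ₗ[ℂ] X)) := hrg.completeSpace_coe
  have hmem : ∀ z, hquo z ∈ LinearMap.range (T : X →ₗ[ℂ] X) := by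
    intro z
    obtain ⟨x, rfl⟩ := Submodule.Quotient.mk_surjective K z
    rw [clmLiftQ_apply]
    exact ⟨x, rfl⟩
  set g : (X ⧸ K) →L[ℂ] (LinearMap.range (T : X →ₗ[ℂ] X)) := hquo.codRestrict _ hmem with hg
  have hginj : LinearMap.ker (g : (X ⧸ K) →ₗ[ℂ] LinearMap.range (T : X →ₗ[ℂ] X)) = ⊥ := by
    rw [hg, ContinuousLinearMap.ker_codRestrict]
    exact hinj
  have hgsurj : LinearMap.range (g : (X ⧸ K) →ₗ[ℂ] LinearMap.range (T : X →ₗ[ℂ] X)) = ⊤ := by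
    rw [eq_top_iff]
    rintro ⟨y, x, rfl⟩ -
    refine ⟨Submodule.Quotient.mk x, ?_⟩
    apply Subtype.ext
    show hquo (Submodule.Quotient.mk x) = T x
    exact clmLiftQ_apply _ T le_rfl x
  set E := ContinuousLinearEquiv.ofBijective g hginj hgsurj with hE
  set c := ‖(E.symm : (LinearMap.range (T : X →ₗ[ℂ] X)) →L[ℂ] (X ⧸ K))‖ + 1 with hc
  have hcpos : 0 < c := by positivity
  have hlow : ∀ z, ‖z‖ ≤ c * ‖hquo z‖ := by
    intro z
    have h1 : z = E.symm (E z) := (E.symm_apply_apply z).symm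
    have h2 : ‖E.symm (E z)‖ ≤ ‖(E.symm : (LinearMap.range (T : X →ₗ[ℂ] X)) →L[ℂ] (X ⧸ K))‖ * ‖E z‖ :=
      (E.symm : (LinearMap.range (T : X →ₗ[ℂ] X)) →L[ℂ] (X ⧸ K)).le_opNorm (E z)
    have h3 : ‖E z‖ = ‖hquo z‖ := by
      have : ((E z : LinearMap.range (T : X →ₗ[ℂ] X)) : X) = hquo z := rfl
      rw [← this]
      rfl
    calc ‖z‖ = ‖E.symm (E z)‖ := by rw [← h1]
      _ ≤ ‖(E.symm : (LinearMap.range (T : X →ₗ[ℂ] X)) →L[ℂ] (X ⧸ K))‖ * ‖E z‖ := h2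
      _ ≤ c * ‖E z‖ := by
          apply mul_le_mul_of_nonneg_right _ (norm_nonneg _)
          rw [hc]; linarith
      _ = c * ‖hquo z‖ := by rw [h3]
  have hD : IsClosed (⇑K.mkQ '' (C' : Set X)) :=
    isClosed_mkQ_image K C' le_sup_right hC'
  have hfinal : ((Submodule.map (T : X →ₗ[ℂ] X) C' : Submodule ℂ X) : Set X) =
      ⇑hquo '' (⇑K.mkQ '' (C' : Set X)) := by
    rw [Set.image_image]
    ext y
    constructor
    · rintro ⟨x, hx, rfl⟩
      exact ⟨x, hx, (clmLiftQ_apply _ T le_rfl x).symm⟩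
    · rintro ⟨x, hx, rfl⟩
      exact ⟨x, hx, (clmLiftQ_apply _ T le_rfl x)⟩
  rw [hfinal]
  exact isClosed_image_of_bddBelow hquo c hcpos hlow _ hD

end Analysis
end StmtTenAux4

noncomputable section StmtTenAux5
open LinearMap Set

/-- wrapper for jordan_aux -/
lemma jordan_nilpotent (V : Type u) [AddCommGroup V] [Module ℂ V] [FiniteDimensional ℂ V]
    (f : V →ₗ[ℂ] V) (d : ℕ) (hd : f ^ d = 0) :
    ∃ (ι : Type) (_ : Fintype ι) (ℓ : ι → ℕ) (e : ι → V),
      (∀ i, 0 < ℓ i) ∧ (∀ i, (f ^ ℓ i) (e i) = 0) ∧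
      LinearIndependent ℂ (fun p : (Σ i : ι, Fin (ℓ i)) => (f ^ (p.2 : ℕ)) (e p.1)) ∧
      Submodule.span ℂ (Set.range (fun p : (Σ i : ι, Fin (ℓ i)) => (f ^ (p.2 : ℕ)) (e p.1))) = ⊤ :=
  jordan_aux (Module.finrank ℂ V) V rfl f d hd

section Lower
variable {X : Type*} [NormedAddCommGroup X] [NormedSpace ℂ X]

lemma clmRestrict_pow_apply (T : X →L[ℂ] X) (P : Submodule ℂ X) (h : ∀ x ∈ P, T x ∈ P)
    (k : ℕ) : ∀ z : P, (((clmRestrict T P h ^ k) z : P) : X) = (T ^ k) (z : X) := by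
  induction k with
  | zero => intro z; rfl
  | succ k ih =>
    intro z
    have h1 : (clmRestrict T P h ^ (k+1)) z = (clmRestrict T P h ^ k) (clmRestrict T P h z) := by
      rw [pow_succ, ContinuousLinearMap.mul_apply]
    rw [h1, ih (clmRestrict T P h z)]
    have h2 : ((clmRestrict T P h z : P) : X) = T (z : X) := rfl
    rw [h2, pow_succ, ContinuousLinearMap.mul_apply]

lemma findim_quot_range_pow (T : X →L[ℂ] X)
    (h : FiniteDimensional ℂ (X ⧸ LinearMap.range (T : X →ₗ[ℂ] X))) (k : ℕ) :
    FiniteDimensional ℂ (X ⧸ LinearMap.range ((T ^ k : X →L[ℂ] X) : X →ₗ[ℂ] X)) := by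
  induction k with
  | zero =>
    have : LinearMap.range ((T ^ 0 : X →L[ℂ] X) : X →ₗ[ℂ] X) = (⊤ : Submodule ℂ X) := by
      rw [pow_zero]
      exact LinearMap.range_eq_top.mpr (fun x => ⟨x, rfl⟩)
    rw [this]
    haveI : Subsingleton (X ⧸ (⊤ : Submodule ℂ X)) := by
      constructor
      intro a b
      obtain ⟨a, rfl⟩ := Submodule.Quotient.mk_surjective _ a
      obtain ⟨b, rfl⟩ := Submodule.Quotient.mk_surjective _ b
      rw [Submodule.Quotient.eq]
      trivial
    exact Module.Finite.of_surjective (0 : PUnit.{1} →ₗ[ℂ] _) (fun x => ⟨PUnit.unit, Subsingleton.elim _ _⟩)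
  | succ k ih =>
    set Rk := LinearMap.range ((T ^ k : X →L[ℂ] X) : X →ₗ[ℂ] X) with hRk
    set Rk1 := LinearMap.range ((T ^ (k + 1) : X →L[ℂ] X) : X →ₗ[ℂ] X) with hRk1
    have hle : Rk1 ≤ Rk := by
      rintro y ⟨x, rfl⟩
      refine ⟨T x, ?_⟩
      show (T ^ k) (T x) = (T ^ (k+1)) x
      rw [pow_succ, ContinuousLinearMap.mul_apply]
    set v : X →ₗ[ℂ] (X ⧸ Rk1) := Rk1.mkQ ∘ₗ ((T ^ k : X →L[ℂ] X) : X →ₗ[ℂ] X) with hv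
    have hvkill : LinearMap.range (T : X →ₗ[ℂ] X) ≤ LinearMap.ker v := by
      rintro y ⟨x, rfl⟩
      show Rk1.mkQ ((T ^ k) (T x)) = 0
      rw [Submodule.mkQ_apply, Submodule.Quotient.mk_eq_zero]
      refine ⟨x, ?_⟩
      show (T ^ (k+1)) x = (T ^ k) (T x)
      rw [pow_succ, ContinuousLinearMap.mul_apply]
    set u := (LinearMap.range (T : X →ₗ[ℂ] X)).liftQ v hvkill with hu
    have hWeq : LinearMap.range u = Submodule.map Rk1.mkQ Rk := by
      rw [hu, Submodule.range_liftQ, hv, LinearMap.range_comp]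
    haveI : FiniteDimensional ℂ (LinearMap.range u) := by
      haveI := h
      exact Module.Finite.range u
    haveI : FiniteDimensional ℂ (Submodule.map Rk1.mkQ Rk) := by rw [← hWeq]; infer_instance
    haveI : FiniteDimensional ℂ ((X ⧸ Rk1) ⧸ (Submodule.map Rk1.mkQ Rk)) := by
      haveI := ih
      exact Module.Finite.equiv (Submodule.quotientQuotientEquivQuotient Rk1 Rk hle).symm
    exact findim_of_sub_quot (Submodule.map Rk1.mkQ Rk)

lemma lower_decomp [CompleteSpace X] (T : X →L[ℂ] X) (hlsf : IsLowerSemiFredholm T)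
    (hfd : HasFiniteDescent T) : IsEssentiallyKato T := by
  classical
  obtain ⟨d, hd⟩ := hfd
  have hstab := range_pow_stab T hd
  set M := LinearMap.range ((T ^ d : X →L[ℂ] X) : X →ₗ[ℂ] X) with hM
  haveI hMfc : FiniteDimensional ℂ (X ⧸ M) := findim_quot_range_pow T hlsf.2 d
  have hMclosed : IsClosed (M : Set X) := isClosed_range_of_fincodim (T ^ d) hMfc
  have hMinv : ∀ x ∈ M, T x ∈ M := by
    rintro y ⟨w, rfl⟩
    have : T ((T ^ d) w) = (T ^ (d + 1)) w := by
      rw [← pow_comm_apply, pow_succ, ContinuousLinearMap.mul_apply]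
    rw [ContinuousLinearMap.coe_coe, this]
    have h1 : (T ^ (d+1)) w ∈ LinearMap.range ((T ^ (d+1) : X →L[ℂ] X) : X →ₗ[ℂ] X) := ⟨w, rfl⟩
    rw [show d + 1 = d + 1 from rfl, hstab 1] at h1
    exact h1
  have hMcomap : M ≤ Submodule.comap (T : X →ₗ[ℂ] X) M := fun x hx => hMinv x hx
  set f : (X ⧸ M) →ₗ[ℂ] (X ⧸ M) := Submodule.mapQ M M (T : X →ₗ[ℂ] X) hMcomap with hf
  have hfmk : ∀ x : X, f (Submodule.Quotient.mk x) = Submodule.Quotient.mk (T x) := by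
    intro x; rw [hf, Submodule.mapQ_apply]; rfl
  have hfpow : ∀ (k : ℕ) (x : X),
      (f ^ k) (Submodule.Quotient.mk x) = Submodule.Quotient.mk ((T ^ k) x) := by
    intro k
    induction k with
    | zero => intro x; rfl
    | succ k ih =>
      intro x
      have h1 : (f ^ (k+1)) (Submodule.Quotient.mk x) = (f ^ k) (f (Submodule.Quotient.mk x)) := by
        rw [pow_succ, Module.End.mul_apply]
      rw [h1, hfmk, ih, pow_comm_apply, pow_succ', ContinuousLinearMap.mul_apply]
  have hfnil : f ^ d = 0 := by
    apply LinearMap.ext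
    intro z
    obtain ⟨x, rfl⟩ := Submodule.Quotient.mk_surjective M z
    rw [hfpow, LinearMap.zero_apply, Submodule.Quotient.mk_eq_zero]
    exact ⟨x, rfl⟩
  obtain ⟨ι, hιfin, ℓ, ebar, hpos, hkill, hLI, hspan⟩ := jordan_nilpotent (X ⧸ M) f d hfnil
  haveI := hιfin
  -- lifts with exact kill
  have hlift : ∀ i, ∃ xi : X, Submodule.Quotient.mk xi = ebar i ∧ (T ^ (ℓ i)) xi = 0 := by
    intro i
    obtain ⟨z, hz⟩ := Submodule.Quotient.mk_surjective M (ebar i)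
    have h1 : (T ^ ℓ i) z ∈ M := by
      have h2 := hkill i
      rw [← hz, hfpow, Submodule.Quotient.mk_eq_zero] at h2
      exact h2
    have h1' : (T ^ ℓ i) z ∈ LinearMap.range ((T ^ (d + ℓ i) : X →L[ℂ] X) : X →ₗ[ℂ] X) := by
      rw [hstab (ℓ i)]; exact h1
    obtain ⟨y, hy⟩ := h1'
    refine ⟨z - (T ^ d) y, ?_, ?_⟩
    · show M.mkQ (z - (T ^ d) y) = ebar i
      rw [map_sub]
      have h6 : M.mkQ ((T ^ d) y) = 0 := (Submodule.Quotient.mk_eq_zero M).mpr ⟨y, rfl⟩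
      rw [h6, sub_zero]
      exact hz
    · rw [map_sub]
      have h4 : (T ^ ℓ i) ((T ^ d) y) = (T ^ ℓ i) z := by
        rw [← pow_add_apply, show ℓ i + d = d + ℓ i by ring]; exact hy
      rw [h4, sub_self]
  choose xg hx1 hx2 using hlift
  set G : (Σ i : ι, Fin (ℓ i)) → X := fun p => (T ^ ((p.2 : ℕ))) (xg p.1) with hG
  set N := Submodule.span ℂ (Set.range G) with hN
  have hGmk : ∀ p : (Σ i : ι, Fin (ℓ i)),
      Submodule.Quotient.mk (G p) = (f ^ ((p.2 : ℕ))) (ebar p.1) := by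
    intro p
    rw [hG, ← hx1 p.1, hfpow]
  haveI hNfd : FiniteDimensional ℂ N := FiniteDimensional.span_of_finite ℂ (Set.finite_range G)
  have hNclosed : IsClosed (N : Set X) := Submodule.closed_of_finiteDimensional N
  have hld : ∀ i, ℓ i ≤ d := by
    intro i
    by_contra hcon
    push_neg at hcon
    have h0 := hLI.ne_zero ⟨i, ⟨d, hcon⟩⟩
    apply h0
    show (f ^ d) (ebar i) = 0
    rw [hfnil]
    rfl
  have hTG : ∀ p : (Σ i : ι, Fin (ℓ i)), T (G p) ∈ N := by
    rintro ⟨i, j⟩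
    have h1 : T (G ⟨i, j⟩) = (T ^ ((j : ℕ) + 1)) (xg i) := by
      rw [hG, pow_succ', ContinuousLinearMap.mul_apply]
    rcases Nat.lt_or_ge ((j : ℕ) + 1) (ℓ i) with hlt | hge
    · rw [h1]
      exact Submodule.subset_span ⟨⟨i, ⟨(j : ℕ) + 1, hlt⟩⟩, rfl⟩
    · have hj1 : (j : ℕ) + 1 = ℓ i := by have := j.isLt; omega
      rw [h1, hj1, hx2 i]
      exact N.zero_mem
  have hNinv : ∀ x ∈ N, T x ∈ N := by
    have : N ≤ Submodule.comap (T : X →ₗ[ℂ] X) N := by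
      rw [hN, Submodule.span_le]
      rintro _ ⟨p, rfl⟩
      exact hTG p
    exact fun x hx => this hx
  have hNker : ∀ g ∈ N, (T ^ d) g = 0 := by
    have : N ≤ LinearMap.ker ((T ^ d : X →L[ℂ] X) : X →ₗ[ℂ] X) := by
      rw [hN, Submodule.span_le]
      rintro _ ⟨⟨i, j⟩, rfl⟩
      show (T ^ d) ((T ^ (j : ℕ)) (xg i)) = 0
      rw [← pow_add_apply]
      have hexp : d + (j : ℕ) = (d + (j : ℕ) - ℓ i) + ℓ i := by
        have := j.isLt; have := hld i; omega
      rw [hexp, pow_add_apply, hx2 i, map_zero]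
    exact fun g hg => this hg
  -- IsCompl M N
  have hdisj : Disjoint M N := by
    rw [Submodule.disjoint_def]
    intro x hxM hxN
    obtain ⟨c, hc⟩ := (Submodule.mem_span_range_iff_exists_fun ℂ).mp hxN
    have hmk0 : Submodule.Quotient.mk x = (0 : X ⧸ M) := (Submodule.Quotient.mk_eq_zero M).mpr hxM
    have hsum : ∑ p : (Σ i : ι, Fin (ℓ i)), c p • ((f ^ ((p.2 : ℕ))) (ebar p.1)) = 0 := by
      have h3 : M.mkQ (∑ p : (Σ i : ι, Fin (ℓ i)), c p • G p) = 0 := by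
        rw [Submodule.mkQ_apply, hc]; exact hmk0
      rw [map_sum] at h3
      rw [← h3]
      congr 1
      funext p
      rw [map_smul, Submodule.mkQ_apply, hGmk]
    have hc0 := Fintype.linearIndependent_iff.mp hLI c hsum
    rw [← hc]
    simp [hc0]
  have hcodis : Codisjoint M N := by
    rw [codisjoint_iff, eq_top_iff]
    intro x _
    have hx : Submodule.Quotient.mk x ∈ Submodule.span ℂ
        (Set.range (fun p : (Σ i : ι, Fin (ℓ i)) => (f ^ ((p.2 : ℕ))) (ebar p.1))) := by
      rw [hspan]; trivial
    obtain ⟨c, hc⟩ := (Submodule.mem_span_range_iff_exists_fun ℂ).mp hx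
    set nn := ∑ p : (Σ i : ι, Fin (ℓ i)), c p • G p with hnn
    have hnnN : nn ∈ N := by
      apply Submodule.sum_mem
      intro p _
      exact N.smul_mem _ (Submodule.subset_span ⟨p, rfl⟩)
    have hxm : x - nn ∈ M := by
      rw [← Submodule.Quotient.mk_eq_zero M]
      have h5 : M.mkQ nn = M.mkQ x := by
        rw [hnn, map_sum]
        rw [show M.mkQ x = Submodule.Quotient.mk x from rfl, ← hc]
        congr 1
        funext p
        rw [map_smul, Submodule.mkQ_apply, hGmk]
      show M.mkQ (x - nn) = 0
      rw [map_sub, h5, sub_self]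
    exact Submodule.mem_sup.mpr ⟨x - nn, hxm, nn, hnnN, sub_add_cancel x nn⟩
  -- Kato on M
  have hsurj : Function.Surjective ⇑(clmRestrict T M hMinv) := by
    rintro ⟨y, hy⟩
    have hy1 : y ∈ LinearMap.range ((T ^ (d+1) : X →L[ℂ] X) : X →ₗ[ℂ] X) := by rw [hstab 1]; exact hy
    obtain ⟨w, hw⟩ := hy1
    refine ⟨⟨(T ^ d) w, ⟨w, rfl⟩⟩, ?_⟩
    apply Subtype.ext
    show T ((T ^ d) w) = y
    rw [← hw, ContinuousLinearMap.coe_coe, ← pow_comm_apply, pow_succ, ContinuousLinearMap.mul_apply]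
  have hSn : ∀ n : ℕ, Function.Surjective ⇑(((clmRestrict T M hMinv) ^ n : ↥M →L[ℂ] ↥M) : ↥M →ₗ[ℂ] ↥M) := by
    intro n
    induction n with
    | zero => intro y; exact ⟨y, rfl⟩
    | succ n ih =>
      intro y
      obtain ⟨z, hz⟩ := ih y
      obtain ⟨w, hw⟩ := hsurj z
      refine ⟨w, ?_⟩
      rw [ContinuousLinearMap.coe_coe, pow_succ, ContinuousLinearMap.mul_apply, hw]; exact hz
  have hKato : IsKato (clmRestrict T M hMinv) := by
    constructor
    · have : LinearMap.range (clmRestrict T M hMinv : ↥M →ₗ[ℂ] ↥M) = ⊤ := LinearMap.range_eq_top.mpr hsurj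
      rw [this]
      rw [Submodule.top_coe]
      exact isClosed_univ
    · intro n
      have : LinearMap.range (((clmRestrict T M hMinv) ^ n : ↥M →L[ℂ] ↥M) : ↥M →ₗ[ℂ] ↥M) = ⊤ :=
        LinearMap.range_eq_top.mpr (hSn n)
      rw [this]
      exact le_top
  -- nilpotent on N
  have hnilp : IsNilpotent (clmRestrict T N hNinv) := by
    refine ⟨d, ?_⟩
    apply ContinuousLinearMap.ext
    intro z
    apply Subtype.ext
    rw [clmRestrict_pow_apply]
    show (T ^ d) (z : X) = ((0 : N →L[ℂ] N) z : X)
    rw [hNker (z : X) z.2]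
    rfl
  exact ⟨M, N, hMinv, hNinv, hMclosed, hNclosed, ⟨hdisj, hcodis⟩, hKato, hnilp, hNfd⟩

end Lower
end StmtTenAux5

noncomputable section StmtTenAux6
open LinearMap Set

section Upper
variable {X : Type*} [NormedAddCommGroup X] [NormedSpace ℂ X]

lemma linpow_eq (T : X →L[ℂ] X) : ∀ (k : ℕ) (x : X),
    ((T : X →ₗ[ℂ] X) ^ k) x = (T ^ k) x := by
  intro k
  induction k with
  | zero => intro x; rfl
  | succ k ih =>
    intro x
    rw [pow_succ, Module.End.mul_apply, pow_succ, ContinuousLinearMap.mul_apply, ih]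
    rfl

lemma upper_decomp [CompleteSpace X] (T : X →L[ℂ] X) (husf : IsUpperSemiFredholm T)
    (ha : HasFiniteAscent T) : IsEssentiallyKato T := by
  classical
  obtain ⟨hkerfd, hrg⟩ := husf
  obtain ⟨n₀, hn₀⟩ := ha
  have hst0 := ker_pow_stab T hn₀
  set p := n₀ + 1 with hpdef
  have hppos : 1 ≤ p := by omega
  have hstab : ∀ m : ℕ, LinearMap.ker ((T ^ (p + m) : X →L[ℂ] X) : X →ₗ[ℂ] X) = LinearMap.ker ((T ^ p : X →L[ℂ] X) : X →ₗ[ℂ] X) := by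
    intro m
    have h1 := hst0 (1 + m)
    have h2 := hst0 1
    rw [show n₀ + (1 + m) = p + m by omega] at h1
    rw [show n₀ + 1 = p by omega] at h2
    rw [h1, ← h2]
  set N := LinearMap.ker ((T ^ p : X →L[ℂ] X) : X →ₗ[ℂ] X) with hN
  -- closed ranges of powers
  have hrange_pow : ∀ k : ℕ, LinearMap.range ((T ^ (k + 1) : X →L[ℂ] X) : X →ₗ[ℂ] X) =
      Submodule.map (T : X →ₗ[ℂ] X) (LinearMap.range ((T ^ k : X →L[ℂ] X) : X →ₗ[ℂ] X)) := by
    intro k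
    apply le_antisymm
    · rintro y ⟨x, rfl⟩
      refine ⟨(T ^ k) x, ⟨x, rfl⟩, ?_⟩
      show T ((T ^ k) x) = (T ^ (k + 1)) x
      rw [pow_succ', ContinuousLinearMap.mul_apply]
    · rintro y ⟨z, ⟨x, rfl⟩, rfl⟩
      refine ⟨x, ?_⟩
      show (T ^ (k+1)) x = T ((T ^ k) x)
      rw [pow_succ', ContinuousLinearMap.mul_apply]
  have hRcl : ∀ k : ℕ, IsClosed ((LinearMap.range ((T ^ k : X →L[ℂ] X) : X →ₗ[ℂ] X) : Submodule ℂ X) : Set X) := by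
    intro k
    induction k with
    | zero =>
      have htop : LinearMap.range ((T ^ 0 : X →L[ℂ] X) : X →ₗ[ℂ] X) = (⊤ : Submodule ℂ X) := by
        rw [pow_zero]
        exact LinearMap.range_eq_top.mpr (fun x => ⟨x, rfl⟩)
      rw [htop, Submodule.top_coe]
      exact isClosed_univ
    | succ k ih =>
      rw [hrange_pow k]
      exact closed_image T hkerfd hrg _ ih
  -- finite dimensional kernels of powers
  have hker_pow_fd : ∀ k : ℕ, FiniteDimensional ℂ (LinearMap.ker ((T ^ k : X →L[ℂ] X) : X →ₗ[ℂ] X)) := by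
    intro k
    induction k with
    | zero =>
      have hbot : LinearMap.ker ((T ^ 0 : X →L[ℂ] X) : X →ₗ[ℂ] X) = (⊥ : Submodule ℂ X) := by
        rw [pow_zero]
        exact LinearMap.ker_eq_bot.mpr (fun a b h => h)
      rw [hbot]
      infer_instance
    | succ k ih =>
      set g : ↥(LinearMap.ker ((T ^ (k+1) : X →L[ℂ] X) : X →ₗ[ℂ] X)) →ₗ[ℂ] X :=
        (T : X →ₗ[ℂ] X) ∘ₗ (LinearMap.ker ((T ^ (k+1) : X →L[ℂ] X) : X →ₗ[ℂ] X)).subtype with hg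
      apply findim_of_ker_range g
      · -- kernel of g embeds in ker T
        haveI := hkerfd
        apply FiniteDimensional.of_injective
          (LinearMap.codRestrict (LinearMap.ker (T : X →ₗ[ℂ] X))
            ((LinearMap.ker ((T ^ (k+1) : X →L[ℂ] X) : X →ₗ[ℂ] X)).subtype ∘ₗ (LinearMap.ker g).subtype)
            (fun z => by
              have hz : g (z : ↥(LinearMap.ker ((T ^ (k+1) : X →L[ℂ] X) : X →ₗ[ℂ] X))) = 0 := z.2
              exact hz))
        intro a b hab
        have h1 : ((a : ↥(LinearMap.ker ((T ^ (k+1) : X →L[ℂ] X) : X →ₗ[ℂ] X))) : X) =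
            ((b : ↥(LinearMap.ker ((T ^ (k+1) : X →L[ℂ] X) : X →ₗ[ℂ] X))) : X) := by
          have := congrArg (Subtype.val) hab
          exact this
        exact Subtype.ext (Subtype.ext h1)
      · -- range of g is inside ker (T^k)
        haveI := ih
        apply Submodule.finiteDimensional_of_le (S₂ := LinearMap.ker ((T ^ k : X →L[ℂ] X) : X →ₗ[ℂ] X))
        rintro y ⟨⟨x, hx⟩, rfl⟩
        show (T ^ k) (T x) = 0
        rw [← ContinuousLinearMap.mul_apply, ← pow_succ]
        exact hx
  haveI hNfd : FiniteDimensional ℂ N := hker_pow_fd p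
  have hNclosed : IsClosed (N : Set X) := Submodule.closed_of_finiteDimensional N
  have hNinv : ∀ x ∈ N, T x ∈ N := by
    intro x hx
    show (T ^ p) (T x) = 0
    rw [pow_comm_apply]
    rw [show (T ^ p) x = 0 from hx, map_zero]
  set f : ↥N →ₗ[ℂ] ↥N := (T : X →ₗ[ℂ] X).restrict hNinv with hf
  have hTf : ∀ (k : ℕ) (z : ↥N), (((f ^ k) z : ↥N) : X) = (T ^ k) (z : X) := by
    intro k z
    rw [hf, Module.End.pow_restrict k hNinv, LinearMap.restrict_coe_apply, linpow_eq]
  have hfnil : f ^ p = 0 := by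
    apply LinearMap.ext
    intro z
    apply Subtype.ext
    rw [hTf]
    exact z.2
  obtain ⟨ι, hιfin, ℓ, e, hpos, hkill, hLI, hspan⟩ := jordan_nilpotent ↥N f p hfnil
  haveI := hιfin
  set B : Module.Basis (Σ i : ι, Fin (ℓ i)) ℂ ↥N := Module.Basis.mk hLI (le_of_eq hspan.symm) with hB
  have hBapp : ∀ q : Σ i : ι, Fin (ℓ i), B q = (f ^ ((q.2 : ℕ))) (e q.1) := fun q =>
    Module.Basis.mk_apply hLI _ q
  set φ : ι → (↥N →ₗ[ℂ] ℂ) := fun i => B.coord ⟨i, ⟨ℓ i - 1, by have := hpos i; omega⟩⟩ with hφ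
  have hcoord : ∀ (i i' : ι) (k : ℕ),
      φ i ((f ^ k) (e i')) = if i' = i ∧ k = ℓ i - 1 then 1 else 0 := by
    intro i i' k
    rcases Nat.lt_or_ge k (ℓ i') with hk | hk
    · have h1 : (f ^ k) (e i') = B ⟨i', ⟨k, hk⟩⟩ := (hBapp ⟨i', ⟨k, hk⟩⟩).symm
      rw [h1, hφ]
      rw [Module.Basis.coord_apply, Module.Basis.repr_self, Finsupp.single_apply]
      have hiff : ((⟨i', ⟨k, hk⟩⟩ : Σ i : ι, Fin (ℓ i)) =
          ⟨i, ⟨ℓ i - 1, by have := hpos i; omega⟩⟩) ↔ (i' = i ∧ k = ℓ i - 1) := by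
        constructor
        · intro h
          obtain ⟨h1, h2⟩ := Sigma.mk.inj_iff.mp h
          subst h1
          exact ⟨rfl, congrArg Fin.val (eq_of_heq h2)⟩
        · rintro ⟨rfl, h2⟩
          subst h2
          rfl
      rw [if_congr hiff rfl rfl]
    · have hz : (f ^ k) (e i') = 0 := by
        rw [show k = (k - ℓ i') + ℓ i' by omega, pow_add, Module.End.mul_apply, hkill i',
          map_zero]
      rw [hz, map_zero, if_neg]
      rintro ⟨rfl, rfl⟩
      have := hpos i'
      omega
  have hφvanish : ∀ (i : ι) (z : ↥N), φ i ((f ^ ℓ i) z) = 0 := by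
    intro i
    have hzero : (φ i) ∘ₗ (f ^ ℓ i) = 0 := by
      apply B.ext
      rintro ⟨i', j'⟩
      rw [LinearMap.comp_apply, hBapp ⟨i', j'⟩]
      show φ i ((f ^ ℓ i) ((f ^ ((j' : ℕ))) (e i'))) = (0 : ↥N →ₗ[ℂ] ℂ) _
      rw [← Module.End.mul_apply, ← pow_add, hcoord i i' (ℓ i + (j' : ℕ))]
      rw [if_neg, LinearMap.zero_apply]
      rintro ⟨rfl, h2⟩
      have := hpos i'
      omega
    intro z
    exact LinearMap.ext_iff.mp hzero z
  have hpure : ∀ (a : ℕ) (x : X), x ∈ N → x ∈ LinearMap.range ((T ^ a : X →L[ℂ] X) : X →ₗ[ℂ] X) →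
      ∃ y : ↥N, x = (T ^ a) ((y : ↥N) : X) := by
    intro a x hxN hxR
    obtain ⟨w, hw⟩ := hxR
    have hwker : w ∈ LinearMap.ker ((T ^ (p + a) : X →L[ℂ] X) : X →ₗ[ℂ] X) := by
      show (T ^ (p + a)) w = 0
      rw [pow_add_apply, show (T ^ a) w = x from hw]
      exact hxN
    rw [hstab a] at hwker
    exact ⟨⟨w, hwker⟩, hw.symm⟩
  -- the functionals
  have hψex : ∀ i : ι, ∃ ψ : X →L[ℂ] ℂ,
      (∀ x ∈ LinearMap.range ((T ^ ℓ i : X →L[ℂ] X) : X →ₗ[ℂ] X), ψ x = 0) ∧ (∀ z : ↥N, ψ ((z : ↥N) : X) = φ i z) := by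
    intro i
    set R := LinearMap.range ((T ^ ℓ i : X →L[ℂ] X) : X →ₗ[ℂ] X) with hR
    haveI hRc : IsClosed ((R : Submodule ℂ X) : Set X) := hRcl (ℓ i)
    set g : ↥N →ₗ[ℂ] (X ⧸ R) := R.mkQ ∘ₗ N.subtype with hg
    have hkerg : LinearMap.ker g ≤ LinearMap.ker (φ i) := by
      intro z hz
      have hz1 : ((z : ↥N) : X) ∈ R := by
        have : R.mkQ ((z : ↥N) : X) = 0 := hz
        rwa [Submodule.mkQ_apply, Submodule.Quotient.mk_eq_zero] at this
      obtain ⟨y, hy⟩ := hpure (ℓ i) ((z : ↥N) : X) z.2 hz1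
      have hzy : z = (f ^ ℓ i) y := by
        apply Subtype.ext
        rw [hTf]
        exact hy
      show φ i z = 0
      rw [hzy]
      exact hφvanish i y
    set χ' : (↥N ⧸ LinearMap.ker g) →ₗ[ℂ] ℂ := (LinearMap.ker g).liftQ (φ i) hkerg with hχ'
    set W := LinearMap.range g with hW
    haveI : FiniteDimensional ℂ W := Module.Finite.range g
    set χ : ↥W →ₗ[ℂ] ℂ := χ' ∘ₗ (g.quotKerEquivRange.symm : ↥W →ₗ[ℂ] (↥N ⧸ LinearMap.ker g))
      with hχ
    have hχg : ∀ z : ↥N, χ ⟨g z, LinearMap.mem_range_self g z⟩ = φ i z := by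
      intro z
      have h1 : g.quotKerEquivRange (Submodule.Quotient.mk z) =
          ⟨g z, LinearMap.mem_range_self g z⟩ := Subtype.ext (g.quotKerEquivRange_apply_mk z)
      have h2 : g.quotKerEquivRange.symm ⟨g z, LinearMap.mem_range_self g z⟩ =
          Submodule.Quotient.mk z := by
        rw [← h1, LinearEquiv.symm_apply_apply]
      show χ' (g.quotKerEquivRange.symm ⟨g z, LinearMap.mem_range_self g z⟩) = φ i z
      rw [h2, hχ', Submodule.liftQ_apply]
    have hχcont : Continuous χ := LinearMap.continuous_of_finiteDimensional χ
    obtain ⟨prj, hprj⟩ := Submodule.ClosedComplemented.of_finiteDimensional W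
    set Θ : (X ⧸ R) →L[ℂ] ℂ := (⟨χ, hχcont⟩ : ↥W →L[ℂ] ℂ).comp prj with hΘ
    set qc : X →L[ℂ] (X ⧸ R) := LinearMap.mkContinuous R.mkQ 1 (fun x => by
      simpa using Submodule.Quotient.norm_mk_le R x) with hqc
    refine ⟨Θ.comp qc, ?_, ?_⟩
    · intro x hx
      have h3 : qc x = 0 := by
        show R.mkQ x = 0
        rw [Submodule.mkQ_apply, Submodule.Quotient.mk_eq_zero]
        exact hx
      rw [ContinuousLinearMap.comp_apply, h3, map_zero]
    · intro z
      have h3 : qc ((z : ↥N) : X) = ((⟨g z, LinearMap.mem_range_self g z⟩ : ↥W) : X ⧸ R) := rfl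
      rw [ContinuousLinearMap.comp_apply, h3, hΘ, ContinuousLinearMap.comp_apply,
        hprj ⟨g z, LinearMap.mem_range_self g z⟩]
      exact hχg z
  choose ψ hψ1 hψ2 using hψex
  -- the projection Q
  set fam : (Σ i : ι, Fin (ℓ i)) → ↥N := fun q => (f ^ ((q.2 : ℕ))) (e q.1) with hfam
  set Q : X →L[ℂ] X := ∑ q : (Σ i : ι, Fin (ℓ i)),
    ((ψ q.1).comp (T ^ (ℓ q.1 - 1 - (q.2 : ℕ)))).smulRight ((fam q : ↥N) : X) with hQ
  have hQapp : ∀ x : X, Q x = ∑ q : (Σ i : ι, Fin (ℓ i)),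
      ψ q.1 ((T ^ (ℓ q.1 - 1 - (q.2 : ℕ))) x) • ((fam q : ↥N) : X) := by
    intro x
    simp only [hQ, ContinuousLinearMap.sum_apply, ContinuousLinearMap.smulRight_apply,
      ContinuousLinearMap.comp_apply]
  have hcoefB : ∀ (q q' : Σ i : ι, Fin (ℓ i)),
      ψ q.1 ((T ^ (ℓ q.1 - 1 - (q.2 : ℕ))) ((fam q' : ↥N) : X)) = if q' = q then 1 else 0 := by
    rintro ⟨i, j⟩ ⟨i', j'⟩
    have h1 : (T ^ (ℓ i - 1 - (j : ℕ))) ((fam ⟨i', j'⟩ : ↥N) : X) =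
        (((f ^ (ℓ i - 1 - (j : ℕ) + (j' : ℕ))) (e i') : ↥N) : X) := by
      rw [hfam]
      show (T ^ (ℓ i - 1 - (j : ℕ))) (((f ^ ((j' : ℕ))) (e i') : ↥N) : X) = _
      rw [← hTf, ← Module.End.mul_apply, ← pow_add]
    rw [h1, hψ2 i, hcoord i i' _]
    have hiff : (i' = i ∧ ℓ i - 1 - (j : ℕ) + (j' : ℕ) = ℓ i - 1) ↔
        ((⟨i', j'⟩ : Σ i : ι, Fin (ℓ i)) = ⟨i, j⟩) := by
      constructor
      · rintro ⟨rfl, h2⟩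
        have hj : j' = j := by
          apply Fin.ext
          have := j.isLt
          have := j'.isLt
          omega
        rw [hj]
      · intro h
        obtain ⟨h2, h3⟩ := Sigma.mk.inj_iff.mp h
        subst h2
        have h4 := congrArg Fin.val (eq_of_heq h3)
        refine ⟨rfl, ?_⟩
        have := j.isLt
        omega
    rw [if_congr hiff rfl rfl]
  have hQN : ∀ x : X, Q x ∈ N := by
    intro x
    rw [hQapp]
    apply Submodule.sum_mem
    intro q _
    exact N.smul_mem _ (fam q).2
  have hQid : ∀ z : ↥N, Q ((z : ↥N) : X) = (z : ↥N) := by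
    have hmaps : ((Q : X →ₗ[ℂ] X) ∘ₗ N.subtype) = N.subtype := by
      apply B.ext
      intro q'
      rw [LinearMap.comp_apply]
      show Q ((B q' : ↥N) : X) = ((B q' : ↥N) : X)
      rw [hBapp q']
      rw [show ((f ^ ((q'.2 : ℕ))) (e q'.1)) = fam q' from rfl]
      rw [hQapp]
      have hterm : ∀ q : (Σ i : ι, Fin (ℓ i)),
          ψ q.1 ((T ^ (ℓ q.1 - 1 - (q.2 : ℕ))) ((fam q' : ↥N) : X)) • ((fam q : ↥N) : X) =
          if q' = q then ((fam q : ↥N) : X) else 0 := by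
        intro q
        rw [hcoefB q q']
        rw [ite_smul, one_smul, zero_smul]
      calc ∑ q : (Σ i : ι, Fin (ℓ i)),
          ψ q.1 ((T ^ (ℓ q.1 - 1 - (q.2 : ℕ))) ((fam q' : ↥N) : X)) • ((fam q : ↥N) : X)
          = ∑ q : (Σ i : ι, Fin (ℓ i)), if q' = q then ((fam q : ↥N) : X) else 0 := by
            congr 1; funext q; exact hterm q
        _ = ((fam q' : ↥N) : X) := by
            rw [Finset.sum_ite_eq]
            simp
    intro z
    have := LinearMap.ext_iff.mp hmaps z
    exact this
  set M := LinearMap.ker (Q : X →ₗ[ℂ] X) with hM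
  have hMclosed : IsClosed ((M : Submodule ℂ X) : Set X) := ContinuousLinearMap.isClosed_ker Q
  have hLIX : LinearIndependent ℂ (fun q : (Σ i : ι, Fin (ℓ i)) => ((fam q : ↥N) : X)) :=
    hLI.map' N.subtype (Submodule.ker_subtype N)
  have hQzero : ∀ x : X, Q x = 0 →
      ∀ q : (Σ i : ι, Fin (ℓ i)), ψ q.1 ((T ^ (ℓ q.1 - 1 - (q.2 : ℕ))) x) = 0 := by
    intro x hx
    apply Fintype.linearIndependent_iff.mp hLIX
    rw [← hQapp]
    exact hx
  have hMinv : ∀ x ∈ M, T x ∈ M := by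
    intro x hx
    have hx0 : Q x = 0 := hx
    show Q (T x) = 0
    rw [hQapp]
    apply Finset.sum_eq_zero
    rintro ⟨i, j⟩ -
    have hexp : (T ^ (ℓ i - 1 - (j : ℕ))) (T x) = (T ^ (ℓ i - (j : ℕ))) x := by
      have harith : ℓ i - 1 - (j : ℕ) + 1 = ℓ i - (j : ℕ) := by have := j.isLt; omega
      rw [← ContinuousLinearMap.mul_apply, ← pow_succ, harith]
    rw [hexp]
    rcases Nat.eq_zero_or_pos (j : ℕ) with hj0 | hjpos
    · rw [hj0, Nat.sub_zero]
      rw [hψ1 i ((T ^ ℓ i) x) ⟨x, rfl⟩, zero_smul]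
    · have hji : ℓ i - (j : ℕ) = ℓ i - 1 - ((j : ℕ) - 1) := by
        have := j.isLt
        omega
      rw [hji]
      have hcz := hQzero x hx0 ⟨i, ⟨(j : ℕ) - 1, by have := j.isLt; omega⟩⟩
      rw [hcz, zero_smul]
  have hdisj : Disjoint M N := by
    rw [Submodule.disjoint_def]
    intro x hxM hxN
    have h1 : Q x = x := hQid ⟨x, hxN⟩
    have h2 : Q x = 0 := hxM
    rw [h2] at h1
    exact h1.symm
  have hcodis : Codisjoint M N := by
    rw [codisjoint_iff, eq_top_iff]
    intro x _
    have hQx : Q x ∈ N := hQN x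
    have hxm : x - Q x ∈ M := by
      show Q (x - Q x) = 0
      rw [map_sub]
      have h6 : Q (Q x) = Q x := hQid ⟨Q x, hQx⟩
      rw [h6, sub_self]
    exact Submodule.mem_sup.mpr ⟨x - Q x, hxm, Q x, hQx, sub_add_cancel x (Q x)⟩
  have hkerN : LinearMap.ker (T : X →ₗ[ℂ] X) ≤ N := by
    intro x hx
    show (T ^ p) x = 0
    rw [show p = (p - 1) + 1 by omega, pow_succ, ContinuousLinearMap.mul_apply]
    rw [show T x = 0 from hx, map_zero]
  have hkerbot : LinearMap.ker (clmRestrict T M hMinv : ↥M →ₗ[ℂ] ↥M) = ⊥ := by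
    rw [eq_bot_iff]
    intro z hz
    have h1 : T ((z : ↥M) : X) = 0 := by
      have h2 : ((clmRestrict T M hMinv z : ↥M) : X) = T ((z : ↥M) : X) := rfl
      rw [← h2]
      rw [show clmRestrict T M hMinv z = 0 from hz]
      rfl
    have h3 : ((z : ↥M) : X) ∈ N := hkerN h1
    have h4 : ((z : ↥M) : X) = 0 := by
      have := Submodule.disjoint_def.mp hdisj ((z : ↥M) : X) z.2 h3
      exact this
    show z = 0
    exact Subtype.ext h4
  have hKato : IsKato (clmRestrict T M hMinv) := by
    constructor
    · have hseteq : ((LinearMap.range (clmRestrict T M hMinv : ↥M →ₗ[ℂ] ↥M) : Submodule ℂ ↥M) : Set ↥M) =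
          Subtype.val ⁻¹' ((Submodule.map (T : X →ₗ[ℂ] X) M : Submodule ℂ X) : Set X) := by
        ext y
        constructor
        · rintro ⟨z, rfl⟩
          exact ⟨(z : ↥M), z.2, rfl⟩
        · rintro ⟨x, hxM, hTx⟩
          refine ⟨⟨x, hxM⟩, ?_⟩
          apply Subtype.ext
          exact hTx
      rw [hseteq]
      exact (closed_image T hkerfd hrg M hMclosed).preimage continuous_subtype_val
    · intro n
      rw [hkerbot]
      exact bot_le
  have hnilp : IsNilpotent (clmRestrict T N hNinv) := by
    refine ⟨p, ?_⟩
    apply ContinuousLinearMap.ext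
    intro z
    apply Subtype.ext
    rw [clmRestrict_pow_apply]
    show (T ^ p) ((z : ↥N) : X) = ((0 : ↥N →L[ℂ] ↥N) z : X)
    rw [show (T ^ p) ((z : ↥N) : X) = 0 from z.2]
    rfl
  exact ⟨M, N, hMinv, hNinv, hMclosed, hNclosed, ⟨hdisj, hcodis⟩, hKato, hnilp, hNfd⟩

end Upper
end StmtTenAux6

noncomputable section StmtTenAux7
open LinearMap Set

lemma fredholm_of_findim {V : Type*} [NormedAddCommGroup V] [NormedSpace ℂ V]
    [FiniteDimensional ℂ V] (S : V →L[ℂ] V) : IsFredholm S := by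
  have hcl : IsClosed ((LinearMap.range (S : V →ₗ[ℂ] V) : Submodule ℂ V) : Set V) :=
    Submodule.closed_of_finiteDimensional _
  exact ⟨⟨inferInstance, hcl⟩, hcl, inferInstance⟩

lemma riesz_of_findim {V : Type*} [NormedAddCommGroup V] [NormedSpace ℂ V]
    [FiniteDimensional ℂ V] (S : V →L[ℂ] V) : IsRiesz S := fun _ _ => fredholm_of_findim _

section Main
variable {X : Type*} [NormedAddCommGroup X] [NormedSpace ℂ X]

lemma key_decomp [CompleteSpace X] (T : X →L[ℂ] X)
    (h : IsUpperSemiBrowder T ∨ IsLowerSemiBrowder T) : IsEssentiallyKato T := by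
  rcases h with ⟨h1, h2⟩ | ⟨h1, h2⟩
  · exact upper_decomp T h1 h2
  · exact lower_decomp T h1 h2

lemma gkrd_of_ek (T : X →L[ℂ] X) (h : IsEssentiallyKato T) : AdmitsGKRD T := by
  obtain ⟨M, N, hM, hN, hMc, hNc, hcompl, hKato, _, hfd⟩ := h
  haveI := hfd
  exact ⟨M, N, hM, hN, hMc, hNc, hcompl, hKato, riesz_of_findim _⟩

end Main
end StmtTenAux7

/-- upper or lower semi-Browder operators are essentially Kato; consequently
σ_gKR(T) ⊆ σ_eK(T) ⊆ σ_{b+}(T) ∩ σ_{b-}(T). -/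
theorem stmt_10 {X : Type*} [NormedAddCommGroup X] [NormedSpace ℂ X] [CompleteSpace X]
    (T : X →L[ℂ] X) :
    ((IsUpperSemiBrowder T ∨ IsLowerSemiBrowder T) → IsEssentiallyKato T) ∧
      specGKR T ⊆ specEK T ∧ specEK T ⊆ specBplus T ∩ specBminus T := by
  refine ⟨fun h => key_decomp T h, ?_, ?_⟩
  · intro lam hlam
    exact fun hek => hlam (gkrd_of_ek _ hek)
  · intro lam hlam
    exact ⟨fun h => hlam (key_decomp _ (Or.inl h)), fun h => hlam (key_decomp _ (Or.inr h))⟩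
end StmtTenAux3
end
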